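/- arXiv:1002.1033 — 2 statements merged into one kernel-verified Lean document; each statement's English description precedes it below -/
import Mathlib

section
/- For each k ≥ 1 let H*(5(2k+1)) be the 4-regular graph obtained from an odd cycle C_{2k+1} by inflating each vertex to a copy of K_5 minus an edge (the two degree-3 vertices of each copy receiving the two cycle edges). Then every 2-factor of H*(5(2k+1)) is either a Hamilton cycle of length 5(2k+1) or consists of 2k+1 cycles of length 5 (one in each inflated copy). In particular, H*(5(2k+1)) is strongly pseudo 2-factor isomorphic but not 2-factor isomorphic. -/
open SimpleGraph

/-- `F` is a 2-factor of `G`: a spanning subgraph in which every vertex has degree 2. -/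
def IsTwoFactor {V : Type*} (G F : SimpleGraph V) : Prop :=
  F ≤ G ∧ ∀ v, (F.neighborSet v).ncard = 2

/-- The number of cycles of a 2-factor, i.e. its number of connected components. -/
noncomputable def numCycles {V : Type*} (F : SimpleGraph V) : ℕ :=
  Nat.card F.ConnectedComponent

/-- The number of cycles of `F` whose length is congruent to `r` modulo 4. -/
noncomputable def cycleCountMod4 {V : Type*} (F : SimpleGraph V) (r : ℕ) : ℕ :=
  Nat.card {c : F.ConnectedComponent // Nat.card c.supp % 4 = r}

/-- `G` is strongly pseudo 2-factor isomorphic: it has a 2-factor and the parities of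
the numbers of cycles of length `≡ 0 (mod 4)` and of length `≡ 2 (mod 4)` are each
the same for all its 2-factors. -/
def StronglyPseudoTwoFactorIso {V : Type*} (G : SimpleGraph V) : Prop :=
  (∃ F, IsTwoFactor G F) ∧ ∀ F₁ F₂, IsTwoFactor G F₁ → IsTwoFactor G F₂ →
    cycleCountMod4 F₁ 0 % 2 = cycleCountMod4 F₂ 0 % 2 ∧
    cycleCountMod4 F₁ 2 % 2 = cycleCountMod4 F₂ 2 % 2

/-- The 4-regular graph `H*(5(2k+1))` obtained from the odd cycle `C_{2k+1}` by
inflating each vertex `i` to a copy of `K₅` minus the edge `{(i,0), (i,1)}`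
(whose two degree-3 vertices are `(i,0)` and `(i,1)`), with the cycle edges
`(i,1)-(i+1,0)`. -/
def Hstar (k : ℕ) : SimpleGraph (ZMod (2 * k + 1) × Fin 5) :=
  SimpleGraph.fromRel (fun a b =>
    (a.1 = b.1 ∧ a.2 ≠ b.2 ∧ ¬(a.2 = 0 ∧ b.2 = 1) ∧ ¬(a.2 = 1 ∧ b.2 = 0)) ∨
    (b.1 = a.1 + 1 ∧ a.2 = 1 ∧ b.2 = 0))

def pairs9 : Fin 9 → Fin 5 × Fin 5 := ![(0,2),(0,3),(0,4),(1,2),(1,3),(1,4),(2,3),(2,4),(3,4)]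
def madjB (b : Fin 9 → Bool) (x y : Fin 5) : Bool :=
  decide (∃ t, b t = true ∧ (pairs9 t = (x,y) ∨ pairs9 t = (y,x)))
def mreachB (b : Fin 9 → Bool) : ℕ → Fin 5 → Fin 5 → Bool
  | 0, x, y => decide (x = y)
  | (m+1), x, y => mreachB b m x y || decide (∃ z, mreachB b m x z = true ∧ madjB b z y = true)
def cB (b : Bool) : ℕ := cond b 1 0


def adjK (x y : Fin 5) : Prop := x ≠ y ∧ ¬(x = 0 ∧ y = 1) ∧ ¬(x = 1 ∧ y = 0)

instance (x y : Fin 5) : Decidable (adjK x y) := by unfold adjK; infer_instance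

lemma hstar_adj_iff {k : ℕ} (a b : ZMod (2*k+1) × Fin 5) :
    (Hstar k).Adj a b ↔ (a.1 = b.1 ∧ adjK a.2 b.2) ∨
      (b.1 = a.1 + 1 ∧ a.2 = 1 ∧ b.2 = 0) ∨ (a.1 = b.1 + 1 ∧ a.2 = 0 ∧ b.2 = 1) := by
  rw [Hstar, fromRel_adj]
  constructor
  · rintro ⟨hne, (⟨h1,h2,h3,h4⟩|⟨h1,h2,h3⟩) | (⟨h1,h2,h3,h4⟩|⟨h1,h2,h3⟩)⟩
    · exact Or.inl ⟨h1, h2, h3, h4⟩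
    · exact Or.inr (Or.inl ⟨h1, h2, h3⟩)
    · exact Or.inl ⟨h1.symm, h2.symm, fun ⟨p,q⟩ => h4 ⟨q,p⟩, fun ⟨p,q⟩ => h3 ⟨q,p⟩⟩
    · exact Or.inr (Or.inr ⟨h1, h3, h2⟩)
  · rintro (⟨h1,h2,h3,h4⟩|⟨h1,h2,h3⟩|⟨h1,h2,h3⟩)
    · exact ⟨fun he => h2 (congrArg Prod.snd he), Or.inl (Or.inl ⟨h1,h2,h3,h4⟩)⟩
    · exact ⟨fun he => by rw [he] at h2; rw [h2] at h3; exact absurd h3 (by decide),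
        Or.inl (Or.inr ⟨h1,h2,h3⟩)⟩
    · exact ⟨fun he => by rw [he] at h2; rw [h2] at h3; exact absurd h3 (by decide),
        Or.inr (Or.inr ⟨h1,h3,h2⟩)⟩

lemma adjK_pairs : ∀ x y : Fin 5, adjK x y → ∃ t, pairs9 t = (x,y) ∨ pairs9 t = (y,x) := by decide

lemma pairs9_adjK : ∀ t, adjK (pairs9 t).1 (pairs9 t).2 := by decide

noncomputable def bfun {k : ℕ} (F : SimpleGraph (ZMod (2*k+1) × Fin 5)) (i : ZMod (2*k+1)) :
    Fin 9 → Bool :=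
  fun t => @decide (F.Adj (i,(pairs9 t).1) (i,(pairs9 t).2)) (Classical.dec _)

lemma bfun_iff {k : ℕ} {F : SimpleGraph (ZMod (2*k+1) × Fin 5)} {i t} :
    bfun F i t = true ↔ F.Adj (i,(pairs9 t).1) (i,(pairs9 t).2) := by
  simp [bfun]

lemma madjB_iff {k : ℕ} {F : SimpleGraph (ZMod (2*k+1) × Fin 5)} {i : ZMod (2*k+1)}
    {x y : Fin 5} (hxy : adjK x y) :
    madjB (bfun F i) x y = true ↔ F.Adj (i,x) (i,y) := by
  rw [madjB, decide_eq_true_eq]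
  constructor
  · rintro ⟨t, hb, (hp|hp)⟩
    · rw [bfun_iff, hp] at hb; exact hb
    · rw [bfun_iff, hp] at hb; exact hb.symm
  · intro h
    obtain ⟨t, ht⟩ := adjK_pairs x y hxy
    refine ⟨t, ?_, ht⟩
    rcases ht with hp | hp
    · rw [bfun_iff, hp]; exact h
    · rw [bfun_iff, hp]; exact h.symm

-- forward direction without adjK assumption
lemma madjB_adj {k : ℕ} {F : SimpleGraph (ZMod (2*k+1) × Fin 5)} {i : ZMod (2*k+1)}
    {x y : Fin 5} (h : madjB (bfun F i) x y = true) : F.Adj (i,x) (i,y) := by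
  rw [madjB, decide_eq_true_eq] at h
  rcases h with ⟨t, hb, (hp|hp)⟩
  · rw [bfun_iff, hp] at hb; exact hb
  · rw [bfun_iff, hp] at hb; exact hb.symm

lemma mreach_reach {k : ℕ} {F : SimpleGraph (ZMod (2*k+1) × Fin 5)} {i : ZMod (2*k+1)}
    {x : Fin 5} : ∀ {m : ℕ} {y : Fin 5}, mreachB (bfun F i) m x y = true → F.Reachable (i,x) (i,y) := by
  intro m
  induction m with
  | zero => intro y h; rw [mreachB, decide_eq_true_eq] at h; rw [h]
  | succ m ih =>
    intro y h
    rw [mreachB, Bool.or_eq_true, decide_eq_true_eq] at h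
    rcases h with h | ⟨z, hz, hzy⟩
    · exact ih h
    · exact (ih hz).trans (madjB_adj hzy).reachable

lemma ncard_subset_four {α : Type*} {a1 a2 a3 a4 : α} {s : Set α}
    (h12 : a1 ≠ a2) (h13 : a1 ≠ a3) (h14 : a1 ≠ a4) (h23 : a2 ≠ a3) (h24 : a2 ≠ a4)
    (h34 : a3 ≠ a4) (hs : s ⊆ {a1, a2, a3, a4}) [DecidablePred (· ∈ s)] :
    s.ncard = (if a1 ∈ s then 1 else 0) + (if a2 ∈ s then 1 else 0)
      + (if a3 ∈ s then 1 else 0) + (if a4 ∈ s then 1 else 0) := by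
  classical
  have hfin : s = ↑(({a1, a2, a3, a4} : Finset α).filter (· ∈ s)) := by
    ext x
    simp only [Finset.coe_filter, Finset.mem_insert, Finset.mem_singleton, Set.mem_setOf_eq]
    constructor
    · intro hx
      refine ⟨?_, hx⟩
      have := hs hx
      simpa using this
    · exact fun h => h.2
  conv_lhs => rw [hfin]
  rw [Set.ncard_coe_finset, Finset.card_filter]
  have e1 : ({a1, a2, a3, a4} : Finset α) = insert a1 (insert a2 (insert a3 {a4})) := rfl
  rw [e1, Finset.sum_insert (by simp [h12, h13, h14]),
    Finset.sum_insert (by simp [h23, h24]), Finset.sum_insert (by simp [h34]),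
    Finset.sum_singleton]
  ac_rfl


lemma cB_decide (p : Prop) [Decidable p] : cB (decide p) = if p then 1 else 0 := by
  by_cases h : p <;> simp [h, cB]

lemma cB_bfun {k : ℕ} (F : SimpleGraph (ZMod (2*k+1) × Fin 5)) (i : ZMod (2*k+1)) (t : Fin 9)
    [Decidable (F.Adj (i,(pairs9 t).1) (i,(pairs9 t).2))] :
    cB (bfun F i t) = if F.Adj (i,(pairs9 t).1) (i,(pairs9 t).2) then 1 else 0 := by
  by_cases h : F.Adj (i,(pairs9 t).1) (i,(pairs9 t).2) <;> simp [bfun, h, cB]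

lemma cB_bfun' {k : ℕ} (F : SimpleGraph (ZMod (2*k+1) × Fin 5)) (i : ZMod (2*k+1)) (t : Fin 9)
    (x y : Fin 5) (hp : pairs9 t = (x,y)) [Decidable (F.Adj (i,x) (i,y))] :
    cB (bfun F i t) = if F.Adj (i,x) (i,y) then 1 else 0 := by
  classical
  rw [cB_bfun]
  refine Eq.trans (if_congr (by rw [hp]) rfl rfl) ?_
  congr

set_option maxHeartbeats 2000000 in
set_option maxRecDepth 100000 in
theorem model (b : Fin 9 → Bool) (e₀ e₁ : Bool)
    (h0 : cB (b 0) + cB (b 1) + cB (b 2) + cB e₀ = 2)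
    (h1 : cB (b 3) + cB (b 4) + cB (b 5) + cB e₁ = 2)
    (h2 : cB (b 0) + cB (b 3) + cB (b 6) + cB (b 7) = 2)
    (h3 : cB (b 1) + cB (b 4) + cB (b 6) + cB (b 8) = 2)
    (h4 : cB (b 2) + cB (b 5) + cB (b 7) + cB (b 8) = 2) :
    e₀ = e₁ ∧ ∀ v, mreachB b 4 0 v = true := by
  revert h0 h1 h2 h3 h4; revert e₀ e₁; revert b; decide

set_option maxHeartbeats 1000000 in
lemma block_main {k : ℕ} {F : SimpleGraph (ZMod (2*k+1) × Fin 5)}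
    (hF : IsTwoFactor (Hstar k) F) (i : ZMod (2*k+1)) :
    (F.Adj (i-1,1) (i,0) ↔ F.Adj (i,1) (i+1,0)) ∧ ∀ v : Fin 5, F.Reachable (i,0) (i,v) := by
  classical
  obtain ⟨hle, hdeg⟩ := hF
  have adj_cases : ∀ (x : Fin 5) (u : ZMod (2*k+1) × Fin 5), F.Adj (i,x) u →
      (u.1 = i ∧ adjK x u.2) ∨ (x = 1 ∧ u = (i+1,0)) ∨ (x = 0 ∧ u = (i-1,1)) := by
    intro x u hu
    rcases (hstar_adj_iff _ _).1 (hle hu) with ⟨h1,h2⟩ | ⟨h1,h2,h3⟩ | ⟨h1,h2,h3⟩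
    · exact Or.inl ⟨h1.symm, h2⟩
    · exact Or.inr (Or.inl ⟨h2, Prod.ext_iff.mpr ⟨h1, h3⟩⟩)
    · refine Or.inr (Or.inr ⟨h2, Prod.ext_iff.mpr ⟨?_, h3⟩⟩)
      have h1' : i = u.1 + 1 := h1
      exact eq_sub_of_add_eq h1'.symm
  -- neighbor subsets
  have hsub0 : F.neighborSet (i,(0:Fin 5)) ⊆ {(i,2),(i,3),(i,4),(i-1,1)} := by
    rintro u hu
    rcases adj_cases 0 u hu with ⟨h1,h2⟩ | ⟨h1,_⟩ | ⟨_,h2⟩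
    · have h3 := (show ∀ y : Fin 5, adjK 0 y → y = 2 ∨ y = 3 ∨ y = 4 by decide) u.2 h2
      rcases h3 with h3|h3|h3
      · exact Or.inl (Prod.ext_iff.mpr ⟨h1, h3⟩)
      · exact Or.inr (Or.inl (Prod.ext_iff.mpr ⟨h1, h3⟩))
      · exact Or.inr (Or.inr (Or.inl (Prod.ext_iff.mpr ⟨h1, h3⟩)))
    · exact absurd h1 (by decide)
    · exact Or.inr (Or.inr (Or.inr h2))
  have hsub1 : F.neighborSet (i,(1:Fin 5)) ⊆ {(i,2),(i,3),(i,4),(i+1,0)} := by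
    rintro u hu
    rcases adj_cases 1 u hu with ⟨h1,h2⟩ | ⟨_,h2⟩ | ⟨h1,_⟩
    · have h3 := (show ∀ y : Fin 5, adjK 1 y → y = 2 ∨ y = 3 ∨ y = 4 by decide) u.2 h2
      rcases h3 with h3|h3|h3
      · exact Or.inl (Prod.ext_iff.mpr ⟨h1, h3⟩)
      · exact Or.inr (Or.inl (Prod.ext_iff.mpr ⟨h1, h3⟩))
      · exact Or.inr (Or.inr (Or.inl (Prod.ext_iff.mpr ⟨h1, h3⟩)))
    · exact Or.inr (Or.inr (Or.inr h2))
    · exact absurd h1 (by decide)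
  have hsubI : ∀ x : Fin 5, x ≠ 0 → x ≠ 1 →
      F.neighborSet (i,x) ⊆ {p : ZMod (2*k+1) × Fin 5 | p.1 = i} := by
    intro x hx0 hx1 u hu
    rcases adj_cases x u hu with ⟨h1,_⟩ | ⟨h1,_⟩ | ⟨h1,_⟩
    · exact h1
    · exact absurd h1 hx1
    · exact absurd h1 hx0
  have hsub2 : F.neighborSet (i,(2:Fin 5)) ⊆ {(i,0),(i,1),(i,3),(i,4)} := by
    rintro u hu
    have h1 := hsubI 2 (by decide) (by decide) hu
    rcases adj_cases 2 u hu with ⟨_,h2⟩ | ⟨h,_⟩ | ⟨h,_⟩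
    · have h3 := (show ∀ y : Fin 5, adjK 2 y → y = 0 ∨ y = 1 ∨ y = 3 ∨ y = 4 by decide) u.2 h2
      rcases h3 with h3|h3|h3|h3
      · exact Or.inl (Prod.ext_iff.mpr ⟨h1, h3⟩)
      · exact Or.inr (Or.inl (Prod.ext_iff.mpr ⟨h1, h3⟩))
      · exact Or.inr (Or.inr (Or.inl (Prod.ext_iff.mpr ⟨h1, h3⟩)))
      · exact Or.inr (Or.inr (Or.inr (Prod.ext_iff.mpr ⟨h1, h3⟩)))
    · exact absurd h (by decide)
    · exact absurd h (by decide)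
  have hsub3 : F.neighborSet (i,(3:Fin 5)) ⊆ {(i,0),(i,1),(i,2),(i,4)} := by
    rintro u hu
    have h1 := hsubI 3 (by decide) (by decide) hu
    rcases adj_cases 3 u hu with ⟨_,h2⟩ | ⟨h,_⟩ | ⟨h,_⟩
    · have h3 := (show ∀ y : Fin 5, adjK 3 y → y = 0 ∨ y = 1 ∨ y = 2 ∨ y = 4 by decide) u.2 h2
      rcases h3 with h3|h3|h3|h3
      · exact Or.inl (Prod.ext_iff.mpr ⟨h1, h3⟩)
      · exact Or.inr (Or.inl (Prod.ext_iff.mpr ⟨h1, h3⟩))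
      · exact Or.inr (Or.inr (Or.inl (Prod.ext_iff.mpr ⟨h1, h3⟩)))
      · exact Or.inr (Or.inr (Or.inr (Prod.ext_iff.mpr ⟨h1, h3⟩)))
    · exact absurd h (by decide)
    · exact absurd h (by decide)
  have hsub4 : F.neighborSet (i,(4:Fin 5)) ⊆ {(i,0),(i,1),(i,2),(i,3)} := by
    rintro u hu
    have h1 := hsubI 4 (by decide) (by decide) hu
    rcases adj_cases 4 u hu with ⟨_,h2⟩ | ⟨h,_⟩ | ⟨h,_⟩
    · have h3 := (show ∀ y : Fin 5, adjK 4 y → y = 0 ∨ y = 1 ∨ y = 2 ∨ y = 3 by decide) u.2 h2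
      rcases h3 with h3|h3|h3|h3
      · exact Or.inl (Prod.ext_iff.mpr ⟨h1, h3⟩)
      · exact Or.inr (Or.inl (Prod.ext_iff.mpr ⟨h1, h3⟩))
      · exact Or.inr (Or.inr (Or.inl (Prod.ext_iff.mpr ⟨h1, h3⟩)))
      · exact Or.inr (Or.inr (Or.inr (Prod.ext_iff.mpr ⟨h1, h3⟩)))
    · exact absurd h (by decide)
    · exact absurd h (by decide)
  -- distinctness helpers
  have dsnd : ∀ (a : ZMod (2*k+1)) (x : Fin 5) (b : ZMod (2*k+1)) (y : Fin 5),
      x ≠ y → ((a,x) : ZMod (2*k+1) × Fin 5) ≠ (b,y) := by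
    intro a x b y hxy he
    exact hxy (congrArg Prod.snd he)
  -- degrees
  have h0 : cB (bfun F i 0) + cB (bfun F i 1) + cB (bfun F i 2)
      + cB (decide (F.Adj (i,0) (i-1,1))) = 2 := by
    have h := ncard_subset_four (dsnd i 2 i 3 (by decide)) (dsnd i 2 i 4 (by decide))
      (dsnd i 2 (i-1) 1 (by decide)) (dsnd i 3 i 4 (by decide))
      (dsnd i 3 (i-1) 1 (by decide)) (dsnd i 4 (i-1) 1 (by decide)) hsub0
    rw [hdeg] at h
    rw [cB_bfun, cB_bfun, cB_bfun, cB_decide]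
    exact h.symm
  have flip : ∀ x y : Fin 5, (if F.Adj (i,x) (i,y) then (1:ℕ) else 0)
      = if F.Adj (i,y) (i,x) then 1 else 0 := fun x y => if_congr (adj_comm F _ _) rfl rfl
  have h1 : cB (bfun F i 3) + cB (bfun F i 4) + cB (bfun F i 5)
      + cB (decide (F.Adj (i,1) (i+1,0))) = 2 := by
    have h := ncard_subset_four (dsnd i 2 i 3 (by decide)) (dsnd i 2 i 4 (by decide))
      (dsnd i 2 (i+1) 0 (by decide)) (dsnd i 3 i 4 (by decide))
      (dsnd i 3 (i+1) 0 (by decide)) (dsnd i 4 (i+1) 0 (by decide)) hsub1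
    rw [hdeg] at h
    rw [cB_bfun, cB_bfun, cB_bfun, cB_decide]
    exact h.symm
  have h2 : cB (bfun F i 0) + cB (bfun F i 3) + cB (bfun F i 6) + cB (bfun F i 7) = 2 := by
    have h := ncard_subset_four (dsnd i 0 i 1 (by decide)) (dsnd i 0 i 3 (by decide))
      (dsnd i 0 i 4 (by decide)) (dsnd i 1 i 3 (by decide))
      (dsnd i 1 i 4 (by decide)) (dsnd i 3 i 4 (by decide)) hsub2
    rw [hdeg] at h
    rw [cB_bfun' F i 0 0 2 rfl, cB_bfun' F i 3 1 2 rfl, cB_bfun' F i 6 2 3 rfl,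
      cB_bfun' F i 7 2 4 rfl, flip 0 2, flip 1 2]
    exact h.symm
  have h3 : cB (bfun F i 1) + cB (bfun F i 4) + cB (bfun F i 6) + cB (bfun F i 8) = 2 := by
    have h := ncard_subset_four (dsnd i 0 i 1 (by decide)) (dsnd i 0 i 2 (by decide))
      (dsnd i 0 i 4 (by decide)) (dsnd i 1 i 2 (by decide))
      (dsnd i 1 i 4 (by decide)) (dsnd i 2 i 4 (by decide)) hsub3
    rw [hdeg] at h
    rw [cB_bfun' F i 1 0 3 rfl, cB_bfun' F i 4 1 3 rfl, cB_bfun' F i 6 2 3 rfl,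
      cB_bfun' F i 8 3 4 rfl, flip 0 3, flip 1 3, flip 2 3]
    exact h.symm
  have h4 : cB (bfun F i 2) + cB (bfun F i 5) + cB (bfun F i 7) + cB (bfun F i 8) = 2 := by
    have h := ncard_subset_four (dsnd i 0 i 1 (by decide)) (dsnd i 0 i 2 (by decide))
      (dsnd i 0 i 3 (by decide)) (dsnd i 1 i 2 (by decide))
      (dsnd i 1 i 3 (by decide)) (dsnd i 2 i 3 (by decide)) hsub4
    rw [hdeg] at h
    rw [cB_bfun' F i 2 0 4 rfl, cB_bfun' F i 5 1 4 rfl, cB_bfun' F i 7 2 4 rfl,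
      cB_bfun' F i 8 3 4 rfl, flip 0 4, flip 1 4, flip 2 4, flip 3 4]
    exact h.symm
  have key := model (bfun F i) _ _ h0 h1 h2 h3 h4
  constructor
  · have hiff := decide_eq_decide.mp key.1
    exact (adj_comm F _ _).trans hiff
  · intro v
    exact mreach_reach (key.2 v)

lemma zmod_self_cast {k : ℕ} (i : ZMod (2*k+1)) : ((i.val : ℕ) : ZMod (2*k+1)) = i :=
  ZMod.natCast_rightInverse i

lemma ext_const {k : ℕ} {F : SimpleGraph (ZMod (2*k+1) × Fin 5)}
    (hF : IsTwoFactor (Hstar k) F) (i : ZMod (2*k+1)) :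
    F.Adj (i,1) (i+1,0) ↔ F.Adj (0,1) (1,0) := by
  have step : ∀ j : ZMod (2*k+1), (F.Adj (j,1) (j+1,0) ↔ F.Adj (j+1,1) (j+1+1,0)) := by
    intro j
    have h := (block_main hF (j+1)).1
    rwa [add_sub_cancel_right] at h
  have stepN : ∀ m : ℕ, (F.Adj (((m:ZMod (2*k+1))),1) ((m:ZMod (2*k+1))+1,0) ↔ F.Adj (0,1) (1,0)) := by
    intro m
    induction m with
    | zero => norm_num
    | succ m ih =>
      have h := (step ((m:ZMod (2*k+1)))).symm.trans ih
      push_cast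
      exact h
  conv_lhs => rw [← zmod_self_cast i]
  exact stepN i.val

lemma conn_case {k : ℕ} {F : SimpleGraph (ZMod (2*k+1) × Fin 5)}
    (hF : IsTwoFactor (Hstar k) F) (hA : F.Adj ((0:ZMod (2*k+1)),1) (1,0)) : F.Connected := by
  have hall : ∀ i, F.Adj (i,1) (i+1,0) := fun i => (ext_const hF i).mpr hA
  have hblock : ∀ i (v : Fin 5), F.Reachable (i,0) (i,v) := fun i => (block_main hF i).2
  have hstep : ∀ i, F.Reachable (i,0) (i+1,0) :=
    fun i => (hblock i 1).trans (hall i).reachable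
  have hN : ∀ m : ℕ, F.Reachable (0,0) (((m : ZMod (2*k+1)),0)) := by
    intro m
    induction m with
    | zero =>
      norm_num
    | succ m ih =>
      have h := ih.trans (hstep ((m:ZMod (2*k+1))))
      push_cast
      exact h
  have hmain : ∀ v : ZMod (2*k+1) × Fin 5, F.Reachable (0,0) v := by
    rintro ⟨i,x⟩
    have h1 : F.Reachable ((0:ZMod (2*k+1)),(0:Fin 5)) (i,0) := by
      conv_rhs => rw [← zmod_self_cast i]
      exact hN i.val
    exact h1.trans (hblock i x)
  have hpre : F.Preconnected := fun u v => (hmain u).symm.trans (hmain v)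
  exact ⟨hpre⟩

lemma blocks_case {k : ℕ} {F : SimpleGraph (ZMod (2*k+1) × Fin 5)}
    (hF : IsTwoFactor (Hstar k) F) (hB : ¬ F.Adj ((0:ZMod (2*k+1)),1) (1,0)) :
    (∀ a b, F.Adj a b → a.1 = b.1) ∧ (∀ i (x : Fin 5), F.Reachable (i,0) (i,x)) := by
  have hno : ∀ i, ¬ F.Adj (i,1) (i+1,0) := fun i h => hB ((ext_const hF i).mp h)
  refine ⟨?_, fun i => (block_main hF i).2⟩
  intro a b hab
  rcases (hstar_adj_iff a b).1 (hF.1 hab) with ⟨h1,_⟩ | ⟨h1,h2,h3⟩ | ⟨h1,h2,h3⟩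
  · exact h1
  · exfalso
    apply hno a.1
    have ha : a = (a.1, 1) := Prod.ext_iff.mpr ⟨rfl, h2⟩
    have hb : b = (a.1 + 1, 0) := Prod.ext_iff.mpr ⟨h1, h3⟩
    rwa [ha, hb] at hab
  · exfalso
    apply hno b.1
    have ha : a = (b.1 + 1, 0) := Prod.ext_iff.mpr ⟨h1, h2⟩
    have hb : b = (b.1, 1) := Prod.ext_iff.mpr ⟨rfl, h3⟩
    have := hab.symm
    rwa [ha, hb] at this

lemma reach_fst {k : ℕ} {F : SimpleGraph (ZMod (2*k+1) × Fin 5)}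
    (hno : ∀ a b, F.Adj a b → a.1 = b.1) :
    ∀ {u v}, F.Reachable u v → u.1 = v.1 := by
  intro u v h
  obtain ⟨w⟩ := h
  induction w with
  | nil => rfl
  | cons h p ih => exact (hno _ _ h).trans ih

lemma blocks_comp {k : ℕ} {F : SimpleGraph (ZMod (2*k+1) × Fin 5)}
    (hF : IsTwoFactor (Hstar k) F) (hB : ¬ F.Adj ((0:ZMod (2*k+1)),1) (1,0)) :
    Nat.card F.ConnectedComponent = 2*k+1 ∧ ∀ c : F.ConnectedComponent, Nat.card c.supp = 5 := by
  obtain ⟨hno, hreach⟩ := blocks_case hF hB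
  have supp_eq : ∀ u : ZMod (2*k+1) × Fin 5,
      (F.connectedComponentMk u).supp = {p | p.1 = u.1} := by
    intro u; ext v
    rw [ConnectedComponent.mem_supp_iff, ConnectedComponent.eq]
    constructor
    · intro h; exact reach_fst hno h
    · intro h
      have h1 : F.Reachable (u.1, v.2) (u.1, u.2) := (hreach u.1 v.2).symm.trans (hreach u.1 u.2)
      have hv : v = (u.1, v.2) := Prod.ext_iff.mpr ⟨h, rfl⟩
      rw [hv]
      exact h1
  constructor
  · have e : F.ConnectedComponent ≃ ZMod (2*k+1) :=
      { toFun := ConnectedComponent.lift (fun v => v.1) (fun v w p _ => reach_fst hno ⟨p⟩)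
        invFun := fun i => F.connectedComponentMk (i, 0)
        left_inv := by
          refine ConnectedComponent.ind ?_
          intro v
          exact ConnectedComponent.sound (hreach v.1 v.2)
        right_inv := fun i => rfl }
    rw [Nat.card_congr e, Nat.card_zmod]
  · refine ConnectedComponent.ind ?_
    intro v
    rw [supp_eq]
    have e : {p : ZMod (2*k+1) × Fin 5 // p.1 = v.1} ≃ Fin 5 :=
      { toFun := fun p => p.1.2
        invFun := fun x => ⟨(v.1, x), rfl⟩
        left_inv := by rintro ⟨⟨a,b⟩,h⟩; exact Subtype.ext (Prod.ext_iff.mpr ⟨h.symm, rfl⟩)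
        right_inv := fun x => rfl }
    exact (Nat.card_congr e).trans (by simp)

def c5rel (x y : Fin 5) : Prop :=
  (x=0∧y=2)∨(x=2∧y=1)∨(x=1∧y=3)∨(x=3∧y=4)∨(x=4∧y=0)

instance (x y : Fin 5) : Decidable (c5rel x y) := by unfold c5rel; infer_instance

def phrel (x y : Fin 5) : Prop := (x=0∧y=2)∨(x=2∧y=3)∨(x=3∧y=4)∨(x=4∧y=1)

instance (x y : Fin 5) : Decidable (phrel x y) := by unfold phrel; infer_instance

def FF5 (k : ℕ) : SimpleGraph (ZMod (2*k+1) × Fin 5) :=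
  SimpleGraph.fromRel (fun a b => a.1 = b.1 ∧ c5rel a.2 b.2)

def FFH (k : ℕ) : SimpleGraph (ZMod (2*k+1) × Fin 5) :=
  SimpleGraph.fromRel (fun a b =>
    (a.1 = b.1 ∧ phrel a.2 b.2) ∨ (b.1 = a.1 + 1 ∧ a.2 = 1 ∧ b.2 = 0))

def nb1 : Fin 5 → Fin 5 := ![2,3,1,4,0]
def nb2 : Fin 5 → Fin 5 := ![4,2,0,1,3]

lemma c5_ne : ∀ x y : Fin 5, c5rel x y → x ≠ y := by decide
lemma c5_nb : ∀ x y : Fin 5, (c5rel x y ∨ c5rel y x) ↔ (y = nb1 x ∨ y = nb2 x) := by decide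
lemma nb1_ne_nb2 : ∀ x, nb1 x ≠ nb2 x := by decide

lemma f5_adj {k : ℕ} (i : ZMod (2*k+1)) (x : Fin 5) (u : ZMod (2*k+1) × Fin 5) :
    (FF5 k).Adj (i,x) u ↔ u.1 = i ∧ (c5rel x u.2 ∨ c5rel u.2 x) := by
  rw [FF5, fromRel_adj]
  constructor
  · rintro ⟨hne, ⟨h1,h2⟩|⟨h1,h2⟩⟩
    · exact ⟨h1.symm, Or.inl h2⟩
    · exact ⟨h1, Or.inr h2⟩
  · rintro ⟨h1, h2|h2⟩
    · exact ⟨fun he => (c5_ne _ _ h2) (congrArg Prod.snd he), Or.inl ⟨h1.symm, h2⟩⟩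
    · exact ⟨fun he => (c5_ne _ _ h2) (congrArg Prod.snd he).symm, Or.inr ⟨h1, h2⟩⟩

lemma f5_fst {k : ℕ} {a b : ZMod (2*k+1) × Fin 5} (h : (FF5 k).Adj a b) : a.1 = b.1 := by
  rw [FF5, fromRel_adj] at h
  rcases h with ⟨_, ⟨h1,_⟩|⟨h1,_⟩⟩
  · exact h1
  · exact h1.symm

lemma f5_nb {k : ℕ} (i : ZMod (2*k+1)) (x : Fin 5) :
    (FF5 k).neighborSet (i,x) = {(i, nb1 x), (i, nb2 x)} := by
  ext u
  simp only [SimpleGraph.mem_neighborSet, Set.mem_insert_iff, Set.mem_singleton_iff]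
  rw [f5_adj]
  constructor
  · rintro ⟨h1, h2⟩
    rcases (c5_nb x u.2).1 h2 with h|h
    · exact Or.inl (Prod.ext_iff.mpr ⟨h1, h⟩)
    · exact Or.inr (Prod.ext_iff.mpr ⟨h1, h⟩)
  · rintro (h|h) <;> rw [h]
    · exact ⟨rfl, (c5_nb x _).2 (Or.inl rfl)⟩
    · exact ⟨rfl, (c5_nb x _).2 (Or.inr rfl)⟩

lemma hF5 {k : ℕ} : IsTwoFactor (Hstar k) (FF5 k) := by
  constructor
  · intro a b hab
    rw [FF5, fromRel_adj] at hab
    rw [hstar_adj_iff]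
    have hK : ∀ x y : Fin 5, c5rel x y → adjK x y := by decide
    have hK' : ∀ x y : Fin 5, c5rel y x → adjK x y := by decide
    rcases hab with ⟨_, ⟨h1,h2⟩|⟨h1,h2⟩⟩
    · exact Or.inl ⟨h1, hK _ _ h2⟩
    · exact Or.inl ⟨h1.symm, hK' _ _ h2⟩
  · rintro ⟨i,x⟩
    rw [f5_nb, Set.ncard_pair]
    intro he
    exact nb1_ne_nb2 x (congrArg Prod.snd he)

lemma ph_ne : ∀ x y : Fin 5, phrel x y → x ≠ y := by decide

lemma fh_adj {k : ℕ} (a b : ZMod (2*k+1) × Fin 5) :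
    (FFH k).Adj a b ↔ (a.1 = b.1 ∧ (phrel a.2 b.2 ∨ phrel b.2 a.2)) ∨
      (b.1 = a.1 + 1 ∧ a.2 = 1 ∧ b.2 = 0) ∨ (a.1 = b.1 + 1 ∧ a.2 = 0 ∧ b.2 = 1) := by
  rw [FFH, fromRel_adj]
  constructor
  · rintro ⟨hne, (⟨h1,h2⟩|⟨h1,h2,h3⟩) | (⟨h1,h2⟩|⟨h1,h2,h3⟩)⟩
    · exact Or.inl ⟨h1, Or.inl h2⟩
    · exact Or.inr (Or.inl ⟨h1, h2, h3⟩)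
    · exact Or.inl ⟨h1.symm, Or.inr h2⟩
    · exact Or.inr (Or.inr ⟨h1, h3, h2⟩)
  · rintro (⟨h1, h2|h2⟩ | ⟨h1,h2,h3⟩ | ⟨h1,h2,h3⟩)
    · exact ⟨fun he => (ph_ne _ _ h2) (congrArg Prod.snd he), Or.inl (Or.inl ⟨h1, h2⟩)⟩
    · exact ⟨fun he => (ph_ne _ _ h2) (congrArg Prod.snd he).symm, Or.inr (Or.inl ⟨h1.symm, h2⟩)⟩
    · refine ⟨fun he => ?_, Or.inl (Or.inr ⟨h1, h2, h3⟩)⟩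
      rw [he] at h2; rw [h2] at h3; exact absurd h3 (by decide)
    · refine ⟨fun he => ?_, Or.inr (Or.inr ⟨h1, h3, h2⟩)⟩
      rw [he] at h2; rw [h2] at h3; exact absurd h3 (by decide)

lemma fh_edge {k : ℕ} : (FFH k).Adj ((0:ZMod (2*k+1)),1) (1,0) := by
  rw [fh_adj]
  exact Or.inr (Or.inl ⟨(zero_add 1).symm, rfl, rfl⟩)

lemma hFH {k : ℕ} : IsTwoFactor (Hstar k) (FFH k) := by
  constructor
  · intro a b hab
    rw [fh_adj] at hab
    rw [hstar_adj_iff]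
    have hK : ∀ x y : Fin 5, (phrel x y ∨ phrel y x) → adjK x y := by decide
    rcases hab with ⟨h1,h2⟩ | h | h
    · exact Or.inl ⟨h1, hK _ _ h2⟩
    · exact Or.inr (Or.inl h)
    · exact Or.inr (Or.inr h)
  · rintro ⟨i,x⟩
    have hsnd : ∀ (a : ZMod (2*k+1)) (y : Fin 5) (b : ZMod (2*k+1)) (z : Fin 5),
        y ≠ z → ((a,y) : ZMod (2*k+1) × Fin 5) ≠ (b,z) :=
      fun a y b z hyz he => hyz (congrArg Prod.snd he)
    rcases (show ∀ z : Fin 5, z = 0 ∨ z = 1 ∨ z = 2 ∨ z = 3 ∨ z = 4 by decide) x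
      with rfl|rfl|rfl|rfl|rfl
    · -- x = 0 : neighbors {(i,2),(i-1,1)}
      have hnb : (FFH k).neighborSet (i,(0:Fin 5)) = {(i,2),(i-1,1)} := by
        ext u
        simp only [SimpleGraph.mem_neighborSet, Set.mem_insert_iff, Set.mem_singleton_iff]
        rw [fh_adj]
        constructor
        · rintro (⟨h1,h2⟩ | ⟨h1,h2,h3⟩ | ⟨h1,h2,h3⟩)
          · have h4 := (show ∀ y : Fin 5, (phrel 0 y ∨ phrel y 0) → y = 2 by decide) u.2 h2
            exact Or.inl (Prod.ext_iff.mpr ⟨h1.symm, h4⟩)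
          · exact absurd h2 (show ¬((0:Fin 5) = 1) by decide)
          · have h1' : i = u.1 + 1 := h1
            exact Or.inr (Prod.ext_iff.mpr ⟨(eq_sub_of_add_eq h1'.symm), h3⟩)
        · rintro (h|h) <;> rw [h]
          · exact Or.inl ⟨rfl, Or.inl (show phrel 0 2 by decide)⟩
          · exact Or.inr (Or.inr ⟨(sub_add_cancel i 1).symm, rfl, rfl⟩)
      rw [hnb, Set.ncard_pair (hsnd i 2 (i-1) 1 (by decide))]
    · -- x = 1 : neighbors {(i,4),(i+1,0)}
      have hnb : (FFH k).neighborSet (i,(1:Fin 5)) = {(i,4),(i+1,0)} := by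
        ext u
        simp only [SimpleGraph.mem_neighborSet, Set.mem_insert_iff, Set.mem_singleton_iff]
        rw [fh_adj]
        constructor
        · rintro (⟨h1,h2⟩ | ⟨h1,h2,h3⟩ | ⟨h1,h2,h3⟩)
          · have h4 := (show ∀ y : Fin 5, (phrel 1 y ∨ phrel y 1) → y = 4 by decide) u.2 h2
            exact Or.inl (Prod.ext_iff.mpr ⟨h1.symm, h4⟩)
          · exact Or.inr (Prod.ext_iff.mpr ⟨h1, h3⟩)
          · exact absurd h2 (show ¬((1:Fin 5) = 0) by decide)
        · rintro (h|h) <;> rw [h]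
          · exact Or.inl ⟨rfl, Or.inr (show phrel 4 1 by decide)⟩
          · exact Or.inr (Or.inl ⟨rfl, rfl, rfl⟩)
      rw [hnb, Set.ncard_pair (hsnd i 4 (i+1) 0 (by decide))]
    · -- x = 2 : neighbors {(i,0),(i,3)}
      have hnb : (FFH k).neighborSet (i,(2:Fin 5)) = {(i,0),(i,3)} := by
        ext u
        simp only [SimpleGraph.mem_neighborSet, Set.mem_insert_iff, Set.mem_singleton_iff]
        rw [fh_adj]
        constructor
        · rintro (⟨h1,h2⟩ | ⟨h1,h2,h3⟩ | ⟨h1,h2,h3⟩)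
          · have h4 := (show ∀ y : Fin 5, (phrel 2 y ∨ phrel y 2) → y = 0 ∨ y = 3 by decide) u.2 h2
            rcases h4 with h4|h4
            · exact Or.inl (Prod.ext_iff.mpr ⟨h1.symm, h4⟩)
            · exact Or.inr (Prod.ext_iff.mpr ⟨h1.symm, h4⟩)
          · exact absurd h2 (show ¬((2:Fin 5) = 1) by decide)
          · exact absurd h2 (show ¬((2:Fin 5) = 0) by decide)
        · rintro (h|h) <;> rw [h]
          · exact Or.inl ⟨rfl, Or.inr (show phrel 0 2 by decide)⟩
          · exact Or.inl ⟨rfl, Or.inl (show phrel 2 3 by decide)⟩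
      rw [hnb, Set.ncard_pair (hsnd i 0 i 3 (by decide))]
    · -- x = 3 : neighbors {(i,2),(i,4)}
      have hnb : (FFH k).neighborSet (i,(3:Fin 5)) = {(i,2),(i,4)} := by
        ext u
        simp only [SimpleGraph.mem_neighborSet, Set.mem_insert_iff, Set.mem_singleton_iff]
        rw [fh_adj]
        constructor
        · rintro (⟨h1,h2⟩ | ⟨h1,h2,h3⟩ | ⟨h1,h2,h3⟩)
          · have h4 := (show ∀ y : Fin 5, (phrel 3 y ∨ phrel y 3) → y = 2 ∨ y = 4 by decide) u.2 h2
            rcases h4 with h4|h4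
            · exact Or.inl (Prod.ext_iff.mpr ⟨h1.symm, h4⟩)
            · exact Or.inr (Prod.ext_iff.mpr ⟨h1.symm, h4⟩)
          · exact absurd h2 (show ¬((3:Fin 5) = 1) by decide)
          · exact absurd h2 (show ¬((3:Fin 5) = 0) by decide)
        · rintro (h|h) <;> rw [h]
          · exact Or.inl ⟨rfl, Or.inr (show phrel 2 3 by decide)⟩
          · exact Or.inl ⟨rfl, Or.inl (show phrel 3 4 by decide)⟩
      rw [hnb, Set.ncard_pair (hsnd i 2 i 4 (by decide))]
    · -- x = 4 : neighbors {(i,3),(i,1)}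
      have hnb : (FFH k).neighborSet (i,(4:Fin 5)) = {(i,3),(i,1)} := by
        ext u
        simp only [SimpleGraph.mem_neighborSet, Set.mem_insert_iff, Set.mem_singleton_iff]
        rw [fh_adj]
        constructor
        · rintro (⟨h1,h2⟩ | ⟨h1,h2,h3⟩ | ⟨h1,h2,h3⟩)
          · have h4 := (show ∀ y : Fin 5, (phrel 4 y ∨ phrel y 4) → y = 3 ∨ y = 1 by decide) u.2 h2
            rcases h4 with h4|h4
            · exact Or.inl (Prod.ext_iff.mpr ⟨h1.symm, h4⟩)
            · exact Or.inr (Prod.ext_iff.mpr ⟨h1.symm, h4⟩)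
          · exact absurd h2 (show ¬((4:Fin 5) = 1) by decide)
          · exact absurd h2 (show ¬((4:Fin 5) = 0) by decide)
        · rintro (h|h) <;> rw [h]
          · exact Or.inl ⟨rfl, Or.inr (show phrel 3 4 by decide)⟩
          · exact Or.inl ⟨rfl, Or.inl (show phrel 4 1 by decide)⟩
      rw [hnb, Set.ncard_pair (hsnd i 3 i 1 (by decide))]


/-- Every 2-factor of `H*(5(2k+1))` is either a Hamilton cycle (of length `5(2k+1)`)
or consists of `2k+1` cycles of length 5 (one in each inflated copy of `K₅ - e`).
In particular, `H*(5(2k+1))` is strongly pseudo 2-factor isomorphic but not 2-factor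
isomorphic. -/
theorem Hstar_strongly_pseudo_not_two_factor_iso (k : ℕ) (hk : 1 ≤ k) :
    (∀ F, IsTwoFactor (Hstar k) F →
      F.Connected ∨
      (numCycles F = 2 * k + 1 ∧ ∀ c : F.ConnectedComponent, Nat.card c.supp = 5)) ∧
    StronglyPseudoTwoFactorIso (Hstar k) ∧
    ¬ (∀ F₁ F₂ : SimpleGraph (ZMod (2 * k + 1) × Fin 5),
        IsTwoFactor (Hstar k) F₁ → IsTwoFactor (Hstar k) F₂ →
        Nonempty (F₁ ≃g F₂)) := by
  haveI : Fact (1 < 2*k+1) := ⟨by omega⟩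
  have hzero : ∀ F, IsTwoFactor (Hstar k) F →
      cycleCountMod4 F 0 = 0 ∧ cycleCountMod4 F 2 = 0 := by
    intro F hF
    have hodd : ∀ c : F.ConnectedComponent, Nat.card c.supp % 4 ≠ 0 ∧ Nat.card c.supp % 4 ≠ 2 := by
      by_cases hA : F.Adj ((0:ZMod (2*k+1)),1) (1,0)
      · have hconn := conn_case hF hA
        refine ConnectedComponent.ind ?_
        intro v
        have hsupp : (F.connectedComponentMk v).supp = Set.univ := by
          ext u
          simp only [ConnectedComponent.mem_supp_iff, ConnectedComponent.eq, Set.mem_univ,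
            iff_true]
          exact hconn.preconnected u v
        have hcard : Nat.card (F.connectedComponentMk v).supp = (2*k+1)*5 := by
          rw [hsupp, Nat.card_univ, Nat.card_eq_fintype_card, Fintype.card_prod, ZMod.card,
            Fintype.card_fin]
        rw [hcard]
        omega
      · intro c
        have := (blocks_comp hF hA).2 c
        rw [this]
        omega
    constructor
    · haveI : IsEmpty {c : F.ConnectedComponent // Nat.card c.supp % 4 = 0} :=
        ⟨fun ⟨c, hc⟩ => (hodd c).1 hc⟩
      exact Nat.card_of_isEmpty
    · haveI : IsEmpty {c : F.ConnectedComponent // Nat.card c.supp % 4 = 2} :=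
        ⟨fun ⟨c, hc⟩ => (hodd c).2 hc⟩
      exact Nat.card_of_isEmpty
  refine ⟨?_, ⟨⟨FF5 k, hF5⟩, ?_⟩, ?_⟩
  · intro F hF
    by_cases hA : F.Adj ((0:ZMod (2*k+1)),1) (1,0)
    · exact Or.inl (conn_case hF hA)
    · exact Or.inr (blocks_comp hF hA)
  · intro F₁ F₂ h1 h2
    rw [(hzero F₁ h1).1, (hzero F₂ h2).1, (hzero F₁ h1).2, (hzero F₂ h2).2]
    exact ⟨rfl, rfl⟩
  · intro hiso
    obtain ⟨e⟩ := hiso (FF5 k) (FFH k) hF5 hFH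
    have hFHconn : (FFH k).Connected := conn_case hFH fh_edge
    have hF5conn : (FF5 k).Preconnected := by
      intro u v
      have h := hFHconn.preconnected (e u) (e v)
      have h2 := h.map e.symm.toHom
      simpa using h2
    have hr := hF5conn ((0:ZMod (2*k+1)),(0:Fin 5)) (1,0)
    have h01 : (0:ZMod (2*k+1)) = 1 := reach_fst (fun a b h => f5_fst h) hr
    exact zero_ne_one h01
end

section
/- Let G be a strongly pseudo 2-factor isomorphic 4-regular graph with a pseudo loyal edge e, and let G' be the 4-seed graft formed from four disjoint copies G_1,...,G_4 of G by deleting the copy e_i = x_iy_i of e in each and adding two new vertices u, v adjacent to x_1,x_2,x_3,x_4 and y_1,y_2,y_3,y_4 respectively. Then G' is 4-regular, strongly pseudo 2-factor isomorphic, and every edge of G' incident to u or v is pseudo loyal. -/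
open SimpleGraph

/-- The edge `xy` of `G` is pseudo loyal: it belongs to some 2-factor, is avoided by
some 2-factor, and for every 2-factor `F` containing it, the length modulo 4 of the
cycle of `F` through `xy` (the connected component of `x` in `F`) is the same
constant. -/
def PseudoLoyal {V : Type*} (G : SimpleGraph V) (x y : V) : Prop :=
  G.Adj x y ∧
  (∃ F, IsTwoFactor G F ∧ F.Adj x y) ∧
  (∃ F, IsTwoFactor G F ∧ ¬ F.Adj x y) ∧
  ∃ c : ℕ, ∀ F, IsTwoFactor G F → F.Adj x y →
    Nat.card (F.connectedComponentMk x).supp % 4 = c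

/-- The 4-seed graft of `G` at the edge `xy`: take four disjoint copies of `G`
(indexed by `Fin 4`), delete the copy of `xy` in each, and add two new vertices
`u = Sum.inr 0`, `v = Sum.inr 1` joined to the four copies of `x` and of `y`
respectively. -/
def fourSeedGraft {V : Type*} (G : SimpleGraph V) (x y : V) :
    SimpleGraph ((Fin 4 × V) ⊕ Fin 2) :=
  SimpleGraph.fromRel (fun a b =>
    (∃ (i : Fin 4) (p q : V), a = Sum.inl (i, p) ∧ b = Sum.inl (i, q) ∧ G.Adj p q ∧
      ¬(p = x ∧ q = y) ∧ ¬(p = y ∧ q = x)) ∨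
    (∃ i : Fin 4, a = Sum.inl (i, x) ∧ b = Sum.inr 0) ∨
    (∃ i : Fin 4, a = Sum.inl (i, y) ∧ b = Sum.inr 1))


open scoped Classical
set_option linter.unusedSectionVars false

section General
variable {α : Type*}

lemma reach_mem_of_closed {H : SimpleGraph α} {S : Set α}
    (hS : ∀ a ∈ S, ∀ b, H.Adj a b → b ∈ S) {a b : α} (ha : a ∈ S)
    (h : H.Reachable a b) : b ∈ S := by
  obtain ⟨w⟩ := h
  induction w with
  | nil => exact ha
  | cons h' p ih => exact ih (hS _ ha _ h')

lemma reachable_of_adj_reachable {H H' : SimpleGraph α}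
    (h : ∀ a b, H'.Adj a b → H.Reachable a b) {a b : α}
    (hr : H'.Reachable a b) : H.Reachable a b := by
  obtain ⟨w⟩ := hr
  induction w with
  | nil => exact Reachable.refl _
  | cons h' p ih => exact (h _ _ h').trans ih

noncomputable def ccEquivOfReachEq {H H' : SimpleGraph α}
    (h : ∀ a b, H.Reachable a b ↔ H'.Reachable a b) :
    H.ConnectedComponent ≃ H'.ConnectedComponent :=
  Quot.congrRight h

lemma ccEquivOfReachEq_mk {H H' : SimpleGraph α}
    (h : ∀ a b, H.Reachable a b ↔ H'.Reachable a b) (v : α) :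
    ccEquivOfReachEq h (H.connectedComponentMk v) = H'.connectedComponentMk v := rfl

lemma ccEquivOfReachEq_supp {H H' : SimpleGraph α}
    (h : ∀ a b, H.Reachable a b ↔ H'.Reachable a b) (C : H.ConnectedComponent) :
    (ccEquivOfReachEq h C).supp = C.supp := by
  ext v
  simp only [ConnectedComponent.mem_supp_iff]
  rw [← ccEquivOfReachEq_mk h v, (ccEquivOfReachEq h).apply_eq_iff_eq]

end General

section AdjChar
variable {V : Type*} (G : SimpleGraph V) (x y : V)

lemma graft_adj (a b : (Fin 4 × V) ⊕ Fin 2) : (fourSeedGraft G x y).Adj a b ↔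
    (∃ i p q, a = Sum.inl (i,p) ∧ b = Sum.inl (i,q) ∧ G.Adj p q ∧
      ¬(p = x ∧ q = y) ∧ ¬(p = y ∧ q = x)) ∨
    (∃ i, a = Sum.inl (i,x) ∧ b = Sum.inr 0) ∨ (∃ i, a = Sum.inr 0 ∧ b = Sum.inl (i,x)) ∨
    (∃ i, a = Sum.inl (i,y) ∧ b = Sum.inr 1) ∨ (∃ i, a = Sum.inr 1 ∧ b = Sum.inl (i,y)) := by
  rw [fourSeedGraft, SimpleGraph.fromRel_adj]
  constructor
  · rintro ⟨hne, (⟨i,p,q,rfl,rfl,h1,h2,h3⟩ | ⟨i,rfl,rfl⟩ | ⟨i,rfl,rfl⟩) |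
      (⟨i,p,q,rfl,rfl,h1,h2,h3⟩ | ⟨i,rfl,rfl⟩ | ⟨i,rfl,rfl⟩)⟩
    · exact Or.inl ⟨i,p,q,rfl,rfl,h1,h2,h3⟩
    · exact Or.inr (Or.inl ⟨i,rfl,rfl⟩)
    · exact Or.inr (Or.inr (Or.inr (Or.inl ⟨i,rfl,rfl⟩)))
    · exact Or.inl ⟨i,q,p,rfl,rfl,h1.symm, fun ⟨h,h'⟩ => h3 ⟨h',h⟩, fun ⟨h,h'⟩ => h2 ⟨h',h⟩⟩
    · exact Or.inr (Or.inr (Or.inl ⟨i,rfl,rfl⟩))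
    · exact Or.inr (Or.inr (Or.inr (Or.inr ⟨i,rfl,rfl⟩)))
  · rintro (⟨i,p,q,rfl,rfl,h1,h2,h3⟩ | ⟨i,rfl,rfl⟩ | ⟨i,rfl,rfl⟩ | ⟨i,rfl,rfl⟩ | ⟨i,rfl,rfl⟩)
    · exact ⟨by simp [h1.ne], Or.inl (Or.inl ⟨i,p,q,rfl,rfl,h1,h2,h3⟩)⟩
    · exact ⟨by simp, Or.inl (Or.inr (Or.inl ⟨i,rfl,rfl⟩))⟩
    · exact ⟨by simp, Or.inr (Or.inr (Or.inl ⟨i,rfl,rfl⟩))⟩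
    · exact ⟨by simp, Or.inl (Or.inr (Or.inr ⟨i,rfl,rfl⟩))⟩
    · exact ⟨by simp, Or.inr (Or.inr (Or.inr ⟨i,rfl,rfl⟩))⟩

end AdjChar

section Nbr
variable {V : Type*} (G : SimpleGraph V) (x y : V)

lemma graft_nbr_u : (fourSeedGraft G x y).neighborSet (Sum.inr 0) =
    Set.range (fun i : Fin 4 => (Sum.inl (i, x) : (Fin 4 × V) ⊕ Fin 2)) := by
  ext b
  constructor
  · intro h
    rcases (graft_adj G x y _ _).mp h with
      (⟨i,p,q,h,_⟩ | ⟨i,h,_⟩ | ⟨i,_,rfl⟩ | ⟨i,h,_⟩ | ⟨i,h,_⟩) <;>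
      first | exact ⟨i, rfl⟩ | simp_all
  · rintro ⟨i, rfl⟩
    exact (graft_adj G x y _ _).mpr (Or.inr (Or.inr (Or.inl ⟨i, rfl, rfl⟩)))

lemma graft_nbr_v : (fourSeedGraft G x y).neighborSet (Sum.inr 1) =
    Set.range (fun i : Fin 4 => (Sum.inl (i, y) : (Fin 4 × V) ⊕ Fin 2)) := by
  ext b
  constructor
  · intro h
    rcases (graft_adj G x y _ _).mp h with
      (⟨i,p,q,h,_⟩ | ⟨i,h,_⟩ | ⟨i,h,_⟩ | ⟨i,h,_⟩ | ⟨i,_,rfl⟩) <;>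
      first | exact ⟨i, rfl⟩ | simp_all
  · rintro ⟨i, rfl⟩
    exact (graft_adj G x y _ _).mpr (Or.inr (Or.inr (Or.inr (Or.inr ⟨i, rfl, rfl⟩))))

lemma graft_nbr_mid (i : Fin 4) (p : V) (hx : p ≠ x) (hy : p ≠ y) :
    (fourSeedGraft G x y).neighborSet (Sum.inl (i,p)) =
    (fun q => (Sum.inl (i,q) : (Fin 4 × V) ⊕ Fin 2)) '' G.neighborSet p := by
  ext b
  constructor
  · intro h
    rcases (graft_adj G x y _ _).mp h with
      (⟨i',p',q,h1,rfl,h2,_,_⟩ | ⟨i',h,_⟩ | ⟨i',h,_⟩ | ⟨i',h,_⟩ | ⟨i',h,_⟩) <;> simp_all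
  · rintro ⟨q, hq, rfl⟩
    exact (graft_adj G x y _ _).mpr
      (Or.inl ⟨i, p, q, rfl, rfl, hq, fun h => hx h.1, fun h => hy h.1⟩)

lemma graft_nbr_x (i : Fin 4) (hne : x ≠ y) :
    (fourSeedGraft G x y).neighborSet (Sum.inl (i,x)) =
    insert (Sum.inr 0) ((fun q => (Sum.inl (i,q) : (Fin 4 × V) ⊕ Fin 2)) ''
      (G.neighborSet x \ {y})) := by
  ext b
  constructor
  · intro h
    rcases (graft_adj G x y _ _).mp h with
      (⟨i',p',q,h1,rfl,h2,h3,_⟩ | ⟨i',h,rfl⟩ | ⟨i',h,_⟩ | ⟨i',h,h4⟩ | ⟨i',h,_⟩) <;> simp_all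
  · rintro (rfl | ⟨q, ⟨hq1, hq2⟩, rfl⟩)
    · exact (graft_adj G x y _ _).mpr (Or.inr (Or.inl ⟨i, rfl, rfl⟩))
    · refine (graft_adj G x y _ _).mpr
        (Or.inl ⟨i, x, q, rfl, rfl, hq1, fun h => hq2 h.2, fun h => hne h.1⟩)

lemma graft_nbr_y (i : Fin 4) (hne : x ≠ y) :
    (fourSeedGraft G x y).neighborSet (Sum.inl (i,y)) =
    insert (Sum.inr 1) ((fun q => (Sum.inl (i,q) : (Fin 4 × V) ⊕ Fin 2)) ''
      (G.neighborSet y \ {x})) := by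
  ext b
  constructor
  · intro h
    rcases (graft_adj G x y _ _).mp h with
      (⟨i',p',q,h1,rfl,h2,_,h3⟩ | ⟨i',h,_⟩ | ⟨i',h,_⟩ | ⟨i',h,rfl⟩ | ⟨i',h,_⟩) <;> simp_all
  · rintro (rfl | ⟨q, ⟨hq1, hq2⟩, rfl⟩)
    · exact (graft_adj G x y _ _).mpr (Or.inr (Or.inr (Or.inr (Or.inl ⟨i, rfl, rfl⟩))))
    · refine (graft_adj G x y _ _).mpr
        (Or.inl ⟨i, y, q, rfl, rfl, hq1, fun h => hne h.1.symm, fun h => hq2 h.2⟩)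

lemma inl_snd_injective (i : Fin 4) :
    Function.Injective (fun q : V => (Sum.inl (i,q) : (Fin 4 × V) ⊕ Fin 2)) := by
  intro a b h; simpa using h

lemma graft_regular [Fintype V] (hxy : G.Adj x y)
    (hreg : ∀ v, (G.neighborSet v).ncard = 4) :
    ∀ a, ((fourSeedGraft G x y).neighborSet a).ncard = 4 := by
  intro a
  match a with
  | Sum.inr j =>
    obtain rfl | rfl : j = 0 ∨ j = 1 := by omega
    · rw [graft_nbr_u, ← Set.image_univ,
        Set.ncard_image_of_injective _ (fun a b h => by simpa using h)]
      simp [Set.ncard_univ]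
    · rw [graft_nbr_v, ← Set.image_univ,
        Set.ncard_image_of_injective _ (fun a b h => by simpa using h)]
      simp [Set.ncard_univ]
  | Sum.inl (i, p) =>
    by_cases hx : p = x
    · subst hx
      rw [graft_nbr_x G p y i hxy.ne]
      rw [Set.ncard_insert_of_notMem (by simp),
        Set.ncard_image_of_injective _ (inl_snd_injective i),
        Set.ncard_diff_singleton_of_mem (by simpa using hxy), hreg]
    · by_cases hy : p = y
      · subst hy
        rw [graft_nbr_y G x p i (fun h => hx h.symm)]
        rw [Set.ncard_insert_of_notMem (by simp),
          Set.ncard_image_of_injective _ (inl_snd_injective i),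
          Set.ncard_diff_singleton_of_mem (by simpa using hxy.symm), hreg]
      · rw [graft_nbr_mid G x y i p hx hy,
          Set.ncard_image_of_injective _ (inl_snd_injective i), hreg]

end Nbr

/-- restriction of a subgraph of the graft to copy `i` -/
def Fi {V : Type*} (F' : SimpleGraph ((Fin 4 × V) ⊕ Fin 2)) (i : Fin 4) : SimpleGraph V :=
  F'.comap (fun p => Sum.inl (i,p))

/-- copy `i` uses the hub `u` -/
def Uu {V : Type*} (F' : SimpleGraph ((Fin 4 × V) ⊕ Fin 2)) (x : V) (i : Fin 4) : Prop :=
  F'.Adj (Sum.inl (i,x)) (Sum.inr 0)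

/-- copy `i` uses the hub `v` -/
def Vv {V : Type*} (F' : SimpleGraph ((Fin 4 × V) ⊕ Fin 2)) (y : V) (i : Fin 4) : Prop :=
  F'.Adj (Sum.inl (i,y)) (Sum.inr 1)

section Analysis
variable {V : Type*} {G : SimpleGraph V} {x y : V} {F' : SimpleGraph ((Fin 4 × V) ⊕ Fin 2)}

lemma Fi_adj {i p q} : (Fi F' i).Adj p q ↔ F'.Adj (Sum.inl (i,p)) (Sum.inl (i,q)) := Iff.rfl

lemma fprime_adj_inl (hsub : F' ≤ fourSeedGraft G x y) {i : Fin 4} {p : V}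
    {b : (Fin 4 × V) ⊕ Fin 2} (h : F'.Adj (Sum.inl (i,p)) b) :
    (∃ q, b = Sum.inl (i,q)) ∨ (p = x ∧ b = Sum.inr 0) ∨ (p = y ∧ b = Sum.inr 1) := by
  rcases (graft_adj G x y _ _).mp (hsub h) with
    (⟨i',p',q,heq,rfl,_⟩ | ⟨i',heq,rfl⟩ | ⟨i',heq,_⟩ | ⟨i',heq,rfl⟩ | ⟨i',heq,_⟩)
  · obtain ⟨rfl, rfl⟩ : i = i' ∧ p = p' := by simpa using heq
    exact Or.inl ⟨q, rfl⟩
  · obtain ⟨rfl, rfl⟩ : i = i' ∧ p = x := by simpa using heq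
    exact Or.inr (Or.inl ⟨rfl, rfl⟩)
  · exact absurd heq (by simp)
  · obtain ⟨rfl, rfl⟩ : i = i' ∧ p = y := by simpa using heq
    exact Or.inr (Or.inr ⟨rfl, rfl⟩)
  · exact absurd heq (by simp)

lemma fprime_adj_u (hsub : F' ≤ fourSeedGraft G x y) {b : (Fin 4 × V) ⊕ Fin 2}
    (h : F'.Adj (Sum.inr 0) b) : ∃ i, b = Sum.inl (i, x) ∧ Uu F' x i := by
  rcases (graft_adj G x y _ _).mp (hsub h) with
    (⟨i',p',q,heq,_⟩ | ⟨i',heq,_⟩ | ⟨i',heq,rfl⟩ | ⟨i',heq,_⟩ | ⟨i',heq,_⟩)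
  · exact absurd heq (by simp)
  · exact absurd heq (by simp)
  · exact ⟨i', rfl, h.symm⟩
  · exact absurd heq (by simp)
  · exact absurd heq (by simp)

lemma fprime_adj_v (hsub : F' ≤ fourSeedGraft G x y) {b : (Fin 4 × V) ⊕ Fin 2}
    (h : F'.Adj (Sum.inr 1) b) : ∃ i, b = Sum.inl (i, y) ∧ Vv F' y i := by
  rcases (graft_adj G x y _ _).mp (hsub h) with
    (⟨i',p',q,heq,_⟩ | ⟨i',heq,_⟩ | ⟨i',heq,_⟩ | ⟨i',heq,_⟩ | ⟨i',heq,rfl⟩)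
  · exact absurd heq (by simp)
  · exact absurd heq (by simp)
  · exact absurd heq (by simp)
  · exact absurd heq (by simp)
  · exact ⟨i', rfl, h.symm⟩

lemma Fi_le (hsub : F' ≤ fourSeedGraft G x y) (i : Fin 4) : Fi F' i ≤ G := by
  intro p q h
  rcases (graft_adj G x y _ _).mp (hsub h) with
    (⟨i',p',q',heq1,heq2,h2,_⟩ | ⟨i',_,heq⟩ | ⟨i',heq,_⟩ | ⟨i',_,heq⟩ | ⟨i',heq,_⟩) <;>
    [skip; exact absurd heq (by simp); exact absurd heq (by simp);
     exact absurd heq (by simp); exact absurd heq (by simp)]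
  simp only [Sum.inl.injEq, Prod.mk.injEq] at heq1 heq2
  rw [← heq1.2, ← heq2.2] at h2; exact h2

lemma Fi_not_xy (hsub : F' ≤ fourSeedGraft G x y) (i : Fin 4) : ¬ (Fi F' i).Adj x y := by
  intro h
  rcases (graft_adj G x y _ _).mp (hsub h) with
    (⟨i',p',q',heq1,heq2,_,h3,_⟩ | ⟨i',_,heq⟩ | ⟨i',heq,_⟩ | ⟨i',_,heq⟩ | ⟨i',heq,_⟩) <;>
    [skip; exact absurd heq (by simp); exact absurd heq (by simp);
     exact absurd heq (by simp); exact absurd heq (by simp)]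
  simp only [Sum.inl.injEq, Prod.mk.injEq] at heq1 heq2
  exact h3 ⟨heq1.2.symm, heq2.2.symm⟩

lemma nbr_inl_mid (hsub : F' ≤ fourSeedGraft G x y) (i : Fin 4) (p : V)
    (hx : p ≠ x) (hy : p ≠ y) :
    F'.neighborSet (Sum.inl (i,p)) =
      (fun q => (Sum.inl (i,q) : (Fin 4 × V) ⊕ Fin 2)) '' (Fi F' i).neighborSet p := by
  ext b
  constructor
  · intro h
    rcases fprime_adj_inl hsub h with ⟨q, rfl⟩ | ⟨rfl, _⟩ | ⟨rfl, _⟩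
    · exact ⟨q, h, rfl⟩
    · exact absurd rfl hx
    · exact absurd rfl hy
  · rintro ⟨q, hq, rfl⟩
    exact hq

lemma nbr_inl_x_used (hsub : F' ≤ fourSeedGraft G x y) (hne : x ≠ y) {i : Fin 4}
    (hU : Uu F' x i) :
    F'.neighborSet (Sum.inl (i,x)) =
      insert (Sum.inr 0) ((fun q => (Sum.inl (i,q) : (Fin 4 × V) ⊕ Fin 2)) ''
        (Fi F' i).neighborSet x) := by
  ext b
  constructor
  · intro h
    rcases fprime_adj_inl hsub h with ⟨q, rfl⟩ | ⟨_, rfl⟩ | ⟨heq, _⟩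
    · exact Set.mem_insert_of_mem _ ⟨q, h, rfl⟩
    · exact Set.mem_insert _ _
    · exact absurd heq hne
  · rintro (rfl | ⟨q, hq, rfl⟩)
    · exact hU
    · exact hq

lemma nbr_inl_x_unused (hsub : F' ≤ fourSeedGraft G x y) (hne : x ≠ y) {i : Fin 4}
    (hU : ¬ Uu F' x i) :
    F'.neighborSet (Sum.inl (i,x)) =
      (fun q => (Sum.inl (i,q) : (Fin 4 × V) ⊕ Fin 2)) '' (Fi F' i).neighborSet x := by
  ext b
  constructor
  · intro h
    rcases fprime_adj_inl hsub h with ⟨q, rfl⟩ | ⟨_, rfl⟩ | ⟨heq, rfl⟩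
    · exact ⟨q, h, rfl⟩
    · exact absurd h hU
    · exact absurd heq hne
  · rintro ⟨q, hq, rfl⟩
    exact hq

lemma nbr_inl_y_used (hsub : F' ≤ fourSeedGraft G x y) (hne : x ≠ y) {i : Fin 4}
    (hV : Vv F' y i) :
    F'.neighborSet (Sum.inl (i,y)) =
      insert (Sum.inr 1) ((fun q => (Sum.inl (i,q) : (Fin 4 × V) ⊕ Fin 2)) ''
        (Fi F' i).neighborSet y) := by
  ext b
  constructor
  · intro h
    rcases fprime_adj_inl hsub h with ⟨q, rfl⟩ | ⟨heq, _⟩ | ⟨_, rfl⟩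
    · exact Set.mem_insert_of_mem _ ⟨q, h, rfl⟩
    · exact absurd heq.symm hne
    · exact Set.mem_insert _ _
  · rintro (rfl | ⟨q, hq, rfl⟩)
    · exact hV
    · exact hq

lemma nbr_inl_y_unused (hsub : F' ≤ fourSeedGraft G x y) (hne : x ≠ y) {i : Fin 4}
    (hV : ¬ Vv F' y i) :
    F'.neighborSet (Sum.inl (i,y)) =
      (fun q => (Sum.inl (i,q) : (Fin 4 × V) ⊕ Fin 2)) '' (Fi F' i).neighborSet y := by
  ext b
  constructor
  · intro h
    rcases fprime_adj_inl hsub h with ⟨q, rfl⟩ | ⟨heq, _⟩ | ⟨_, rfl⟩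
    · exact ⟨q, h, rfl⟩
    · exact absurd heq.symm hne
    · exact absurd h hV
  · rintro ⟨q, hq, rfl⟩
    exact hq

variable [Fintype V]

lemma Fi_deg_mid (hsub : F' ≤ fourSeedGraft G x y)
    (hdeg : ∀ a, (F'.neighborSet a).ncard = 2) (i : Fin 4) (p : V)
    (hx : p ≠ x) (hy : p ≠ y) : ((Fi F' i).neighborSet p).ncard = 2 := by
  have h := hdeg (Sum.inl (i,p))
  rw [nbr_inl_mid hsub i p hx hy,
    Set.ncard_image_of_injective _ (inl_snd_injective i)] at h
  exact h

lemma Fi_deg_x_used (hsub : F' ≤ fourSeedGraft G x y) (hne : x ≠ y)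
    (hdeg : ∀ a, (F'.neighborSet a).ncard = 2) {i : Fin 4} (hU : Uu F' x i) :
    ((Fi F' i).neighborSet x).ncard = 1 := by
  have h := hdeg (Sum.inl (i,x))
  rw [nbr_inl_x_used hsub hne hU, Set.ncard_insert_of_notMem (by simp),
    Set.ncard_image_of_injective _ (inl_snd_injective i)] at h
  omega

lemma Fi_deg_x_unused (hsub : F' ≤ fourSeedGraft G x y) (hne : x ≠ y)
    (hdeg : ∀ a, (F'.neighborSet a).ncard = 2) {i : Fin 4} (hU : ¬ Uu F' x i) :
    ((Fi F' i).neighborSet x).ncard = 2 := by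
  have h := hdeg (Sum.inl (i,x))
  rw [nbr_inl_x_unused hsub hne hU,
    Set.ncard_image_of_injective _ (inl_snd_injective i)] at h
  exact h

lemma Fi_deg_y_used (hsub : F' ≤ fourSeedGraft G x y) (hne : x ≠ y)
    (hdeg : ∀ a, (F'.neighborSet a).ncard = 2) {i : Fin 4} (hV : Vv F' y i) :
    ((Fi F' i).neighborSet y).ncard = 1 := by
  have h := hdeg (Sum.inl (i,y))
  rw [nbr_inl_y_used hsub hne hV, Set.ncard_insert_of_notMem (by simp),
    Set.ncard_image_of_injective _ (inl_snd_injective i)] at h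
  omega

lemma Fi_deg_y_unused (hsub : F' ≤ fourSeedGraft G x y) (hne : x ≠ y)
    (hdeg : ∀ a, (F'.neighborSet a).ncard = 2) {i : Fin 4} (hV : ¬ Vv F' y i) :
    ((Fi F' i).neighborSet y).ncard = 2 := by
  have h := hdeg (Sum.inl (i,y))
  rw [nbr_inl_y_unused hsub hne hV,
    Set.ncard_image_of_injective _ (inl_snd_injective i)] at h
  exact h

lemma ncard_nbr_eq_degree (H : SimpleGraph V) [DecidableRel H.Adj] (v : V) :
    (H.neighborSet v).ncard = H.degree v := by
  rw [SimpleGraph.degree, neighborFinset_def, Set.ncard_eq_toFinset_card']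

lemma Fi_odd_ncard (hsub : F' ≤ fourSeedGraft G x y) (hne : x ≠ y)
    (hdeg : ∀ a, (F'.neighborSet a).ncard = 2) (i : Fin 4) (v : V) :
    Odd ((Fi F' i).neighborSet v).ncard ↔
      (v = x ∧ Uu F' x i) ∨ (v = y ∧ Vv F' y i) := by
  by_cases hvx : v = x
  · rw [hvx]
    by_cases hU : Uu F' x i
    · rw [Fi_deg_x_used hsub hne hdeg hU]
      simp [hU]
    · rw [Fi_deg_x_unused hsub hne hdeg hU]
      simp [hU, hne]
  · by_cases hvy : v = y
    · rw [hvy]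
      have hyx : y ≠ x := Ne.symm hne
      by_cases hV : Vv F' y i
      · rw [Fi_deg_y_used hsub hne hdeg hV]
        simp [hV, hyx]
      · rw [Fi_deg_y_unused hsub hne hdeg hV]
        simp [hV, hyx]
    · rw [Fi_deg_mid hsub hdeg i v hvx hvy]
      simp [hvx, hvy]

lemma used_iff (hsub : F' ≤ fourSeedGraft G x y) (hne : x ≠ y)
    (hdeg : ∀ a, (F'.neighborSet a).ncard = 2) (i : Fin 4) :
    Uu F' x i ↔ Vv F' y i := by
  classical
  have hodd : ∀ v, Odd ((Fi F' i).degree v) ↔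
      (v = x ∧ Uu F' x i) ∨ (v = y ∧ Vv F' y i) := fun v => by
    rw [← ncard_nbr_eq_degree]
    exact Fi_odd_ncard hsub hne hdeg i v
  have heven := (Fi F' i).even_card_odd_degree_vertices
  constructor
  · intro hU
    by_contra hV
    have : (Finset.univ.filter fun v => Odd ((Fi F' i).degree v)) = {x} := by
      ext v
      simp only [Finset.mem_filter, Finset.mem_univ, true_and, Finset.mem_singleton, hodd]
      constructor
      · rintro (⟨rfl, _⟩ | ⟨_, h⟩)
        · rfl
        · exact absurd h hV
      · rintro rfl; exact Or.inl ⟨rfl, hU⟩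
    rw [this] at heven
    simp at heven
  · intro hV
    by_contra hU
    have : (Finset.univ.filter fun v => Odd ((Fi F' i).degree v)) = {y} := by
      ext v
      simp only [Finset.mem_filter, Finset.mem_univ, true_and, Finset.mem_singleton, hodd]
      constructor
      · rintro (⟨_, h⟩ | ⟨rfl, _⟩)
        · exact absurd h hU
        · rfl
      · rintro rfl; exact Or.inr ⟨rfl, hV⟩
    rw [this] at heven
    simp at heven

end Analysis

section L4
variable {V : Type*} [Fintype V] {G : SimpleGraph V} {x y : V}
  {F' : SimpleGraph ((Fin 4 × V) ⊕ Fin 2)}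

section Gen2
variable {α : Type*}

lemma cycleCount_eq_of_reachEq {H H' : SimpleGraph α}
    (h : ∀ a b, H.Reachable a b ↔ H'.Reachable a b) (r : ℕ) :
    cycleCountMod4 H r = cycleCountMod4 H' r :=
  Nat.card_congr (Equiv.subtypeEquiv (ccEquivOfReachEq h)
    (fun C => by rw [ccEquivOfReachEq_supp h C]))

lemma mk_supp_eq_of_reachEq {H H' : SimpleGraph α}
    (h : ∀ a b, H.Reachable a b ↔ H'.Reachable a b) (v : α) :
    (H.connectedComponentMk v).supp = (H'.connectedComponentMk v).supp := by
  rw [← ccEquivOfReachEq_mk h v, ccEquivOfReachEq_supp h]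

/-- the restriction of a graph to the reachable set of `x` -/
def reachRestrict (H : SimpleGraph α) (x : α) : SimpleGraph α where
  Adj p q := H.Adj p q ∧ H.Reachable x p ∧ H.Reachable x q
  symm := ⟨fun p q ⟨h1,h2,h3⟩ => ⟨h1.symm, h3, h2⟩⟩
  loopless := ⟨fun p ⟨h1,_⟩ => H.irrefl h1⟩

lemma reachRestrict_nbr_of_reach {H : SimpleGraph α} {x p : α} (h : H.Reachable x p) :
    (reachRestrict H x).neighborSet p = H.neighborSet p := by
  ext q
  show (H.Adj p q ∧ H.Reachable x p ∧ H.Reachable x q) ↔ _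
  exact ⟨fun ⟨h1,_⟩ => h1, fun hq => ⟨hq, h, h.trans hq.reachable⟩⟩

lemma reachRestrict_nbr_of_not {H : SimpleGraph α} {x p : α} (h : ¬ H.Reachable x p) :
    (reachRestrict H x).neighborSet p = ∅ := by
  ext q
  show (H.Adj p q ∧ H.Reachable x p ∧ H.Reachable x q) ↔ _
  exact ⟨fun ⟨_,h2,_⟩ => absurd h2 h, fun hq => absurd hq (Set.notMem_empty q)⟩


end Gen2

section Used
variable {V : Type*} [Fintype V] {G : SimpleGraph V} {x y : V}
  {F' : SimpleGraph ((Fin 4 × V) ⊕ Fin 2)}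

/-- the 2-factor of `G` obtained from a used copy by re-adding the edge `xy` -/
def GiG (F' : SimpleGraph ((Fin 4 × V) ⊕ Fin 2)) (x y : V) (i : Fin 4) : SimpleGraph V :=
  Fi F' i ⊔ fromEdgeSet {s(x,y)}

lemma Gi_adj {i : Fin 4} {p q : V} : (GiG F' x y i).Adj p q ↔
    (Fi F' i).Adj p q ∨ (p ≠ q ∧ ((p = x ∧ q = y) ∨ (p = y ∧ q = x))) := by
  simp only [GiG, sup_adj, fromEdgeSet_adj, Set.mem_singleton_iff, Sym2.eq_iff]
  tauto

lemma Fi_reach_xy (hsub : F' ≤ fourSeedGraft G x y) (hne : x ≠ y)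
    (hdeg : ∀ a, (F'.neighborSet a).ncard = 2) {i : Fin 4} (hU : Uu F' x i) :
    (Fi F' i).Reachable x y := by
  classical
  by_contra hr
  have heven := (reachRestrict (Fi F' i) x).even_card_odd_degree_vertices
  have hfil : (Finset.univ.filter fun v => Odd ((reachRestrict (Fi F' i) x).degree v))
      = {x} := by
    ext v
    simp only [Finset.mem_filter, Finset.mem_univ, true_and, Finset.mem_singleton]
    constructor
    · intro hv
      rw [← ncard_nbr_eq_degree] at hv
      by_cases hxv : (Fi F' i).Reachable x v
      · rw [reachRestrict_nbr_of_reach hxv] at hv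
        rcases (Fi_odd_ncard hsub hne hdeg i v).mp hv with ⟨rfl, _⟩ | ⟨rfl, _⟩
        · rfl
        · exact absurd hxv hr
      · rw [reachRestrict_nbr_of_not hxv] at hv
        simp at hv
    · rintro rfl
      rw [← ncard_nbr_eq_degree, reachRestrict_nbr_of_reach (Reachable.refl _),
        Fi_deg_x_used hsub hne hdeg hU]
      exact odd_one
  rw [hfil] at heven
  simp at heven

lemma Gi_le (hsub : F' ≤ fourSeedGraft G x y) (hxy : G.Adj x y) (i : Fin 4) :
    GiG F' x y i ≤ G := by
  intro p q h
  rcases Gi_adj.mp h with h | ⟨_, ⟨rfl, rfl⟩ | ⟨rfl, rfl⟩⟩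
  · exact Fi_le hsub i h
  · exact hxy
  · exact hxy.symm

lemma Gi_nbr_mid {i : Fin 4} {p : V} (hx : p ≠ x) (hy : p ≠ y) :
    (GiG F' x y i).neighborSet p = (Fi F' i).neighborSet p := by
  ext q
  constructor
  · intro h
    rcases Gi_adj.mp h with h | ⟨_, ⟨rfl, rfl⟩ | ⟨rfl, rfl⟩⟩
    · exact h
    · exact absurd rfl hx
    · exact absurd rfl hy
  · exact fun h => Gi_adj.mpr (Or.inl h)

lemma Gi_nbr_x (hne : x ≠ y) {i : Fin 4} :
    (GiG F' x y i).neighborSet x = insert y ((Fi F' i).neighborSet x) := by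
  ext q
  constructor
  · intro h
    rcases Gi_adj.mp h with h | ⟨h1, ⟨_, rfl⟩ | ⟨heq, rfl⟩⟩
    · exact Set.mem_insert_of_mem _ h
    · exact Set.mem_insert _ _
    · exact absurd heq hne
  · intro h
    rcases Set.mem_insert_iff.mp h with rfl | h
    · exact Gi_adj.mpr (Or.inr ⟨hne, Or.inl ⟨rfl, rfl⟩⟩)
    · exact Gi_adj.mpr (Or.inl h)

lemma Gi_nbr_y (hne : x ≠ y) {i : Fin 4} :
    (GiG F' x y i).neighborSet y = insert x ((Fi F' i).neighborSet y) := by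
  ext q
  constructor
  · intro h
    rcases Gi_adj.mp h with h | ⟨h1, ⟨heq, rfl⟩ | ⟨_, rfl⟩⟩
    · exact Set.mem_insert_of_mem _ h
    · exact absurd heq (Ne.symm hne)
    · exact Set.mem_insert _ _
  · intro h
    rcases Set.mem_insert_iff.mp h with rfl | h
    · exact Gi_adj.mpr (Or.inr ⟨Ne.symm hne, Or.inr ⟨rfl, rfl⟩⟩)
    · exact Gi_adj.mpr (Or.inl h)

lemma Gi_adj_xy (hne : x ≠ y) (i : Fin 4) : (GiG F' x y i).Adj x y :=
  Gi_adj.mpr (Or.inr ⟨hne, Or.inl ⟨rfl, rfl⟩⟩)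

lemma Gi_two_factor (hsub : F' ≤ fourSeedGraft G x y) (hxy : G.Adj x y)
    (hdeg : ∀ a, (F'.neighborSet a).ncard = 2) {i : Fin 4} (hU : Uu F' x i) :
    IsTwoFactor G (GiG F' x y i) := by
  have hne := hxy.ne
  refine ⟨Gi_le hsub hxy i, fun v => ?_⟩
  by_cases hvx : v = x
  · rw [hvx, Gi_nbr_x hne, Set.ncard_insert_of_notMem (s := (Fi F' i).neighborSet x) (a := y)
      (fun h => Fi_not_xy hsub i h), Fi_deg_x_used hsub hne hdeg hU]
  · by_cases hvy : v = y
    · rw [hvy, Gi_nbr_y hne, Set.ncard_insert_of_notMem (s := (Fi F' i).neighborSet y) (a := x)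
        (fun h => Fi_not_xy hsub i h.symm),
        Fi_deg_y_used hsub hne hdeg ((used_iff hsub hne hdeg i).mp hU)]
    · rw [Gi_nbr_mid hvx hvy, Fi_deg_mid hsub hdeg i v hvx hvy]

lemma Gi_reach_iff (hsub : F' ≤ fourSeedGraft G x y) (hne : x ≠ y)
    (hdeg : ∀ a, (F'.neighborSet a).ncard = 2) {i : Fin 4} (hU : Uu F' x i) :
    ∀ p q, (Fi F' i).Reachable p q ↔ (GiG F' x y i).Reachable p q := by
  intro p q
  constructor
  · exact fun h => h.mono le_sup_left
  · refine reachable_of_adj_reachable (fun a b hab => ?_)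
    rcases Gi_adj.mp hab with h | ⟨_, ⟨rfl, rfl⟩ | ⟨rfl, rfl⟩⟩
    · exact h.reachable
    · exact Fi_reach_xy hsub hne hdeg hU
    · exact (Fi_reach_xy hsub hne hdeg hU).symm

lemma Gi_count_eq (hsub : F' ≤ fourSeedGraft G x y) (hne : x ≠ y)
    (hdeg : ∀ a, (F'.neighborSet a).ncard = 2) {i : Fin 4} (hU : Uu F' x i) (r : ℕ) :
    cycleCountMod4 (Fi F' i) r = cycleCountMod4 (GiG F' x y i) r :=
  cycleCount_eq_of_reachEq (Gi_reach_iff hsub hne hdeg hU) r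

lemma Gi_supp_eq (hsub : F' ≤ fourSeedGraft G x y) (hne : x ≠ y)
    (hdeg : ∀ a, (F'.neighborSet a).ncard = 2) {i : Fin 4} (hU : Uu F' x i) (v : V) :
    ((Fi F' i).connectedComponentMk v).supp = ((GiG F' x y i).connectedComponentMk v).supp :=
  mk_supp_eq_of_reachEq (Gi_reach_iff hsub hne hdeg hU) v

end Used

end L4

section Count
variable {V : Type*} [Fintype V] {G : SimpleGraph V} {x y : V}
  {F' : SimpleGraph ((Fin 4 × V) ⊕ Fin 2)}

/-- inclusion of copy `i` as a graph homomorphism -/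
def homInl (F' : SimpleGraph ((Fin 4 × V) ⊕ Fin 2)) (i : Fin 4) : Fi F' i →g F' :=
  ⟨fun p => Sum.inl (i,p), fun h => h⟩

lemma reach_inl (i : Fin 4) {p q : V} (h : (Fi F' i).Reachable p q) :
    F'.Reachable (Sum.inl (i,p)) (Sum.inl (i,q)) := h.map (homInl F' i)

lemma inlx_injective (x : V) :
    Function.Injective (fun i : Fin 4 => (Sum.inl (i,x) : (Fin 4 × V) ⊕ Fin 2)) := by
  intro a b h; simpa using h

lemma used_nbr (hsub : F' ≤ fourSeedGraft G x y) :
    F'.neighborSet (Sum.inr 0) =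
      (fun i => (Sum.inl (i,x) : (Fin 4 × V) ⊕ Fin 2)) '' {i | Uu F' x i} := by
  ext b
  constructor
  · intro h
    obtain ⟨i, rfl, hU⟩ := fprime_adj_u hsub h
    exact ⟨i, hU, rfl⟩
  · rintro ⟨i, hU, rfl⟩
    exact hU.symm

lemma used_ncard (hsub : F' ≤ fourSeedGraft G x y)
    (hdeg : ∀ a, (F'.neighborSet a).ncard = 2) :
    {i : Fin 4 | Uu F' x i}.ncard = 2 := by
  have h := hdeg (Sum.inr 0)
  rw [used_nbr hsub, Set.ncard_image_of_injective _ (inlx_injective x)] at h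
  exact h

lemma card_subtype_split {β : Type*} [Finite β] (P : β → Prop) (b₀ : β) [Decidable (P b₀)] :
    Nat.card {b // P b} = Nat.card {b // P b ∧ b ≠ b₀} + (if P b₀ then 1 else 0) := by
  classical
  have h1 : Nat.card {b // P b} = ({b | P b} : Set β).ncard := Nat.card_coe_set_eq _
  have h2 : Nat.card {b // P b ∧ b ≠ b₀} = ({b | P b ∧ b ≠ b₀} : Set β).ncard :=
    Nat.card_coe_set_eq _
  have h3 : ({b | P b ∧ b ≠ b₀} : Set β) = {b | P b} \ {b₀} := by
    ext b; simp [and_comm]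
  rw [h1, h2, h3]
  by_cases hb : P b₀
  · rw [if_pos hb]
    have hmem : b₀ ∈ {b | P b} := hb
    have hpos : 0 < ({b | P b} : Set β).ncard :=
      (Set.ncard_pos (Set.toFinite _)).mpr ⟨b₀, hmem⟩
    rw [Set.ncard_diff_singleton_of_mem hmem]
    omega
  · rw [if_neg hb, Set.diff_singleton_eq_self (s := {b | P b}) hb, add_zero]

lemma nat_card_sigma {ι : Type*} [Fintype ι] (β : ι → Type*) [∀ i, Finite (β i)] :
    Nat.card (Σ i, β i) = ∑ i, Nat.card (β i) := by
  classical
  letI : ∀ i, Fintype (β i) := fun i => Fintype.ofFinite _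
  simp [Nat.card_eq_fintype_card, Fintype.card_sigma]

lemma theta_supp (hsub : F' ≤ fourSeedGraft G x y) (hne : x ≠ y)
    (hdeg : ∀ a, (F'.neighborSet a).ncard = 2) {i : Fin 4}
    {D : (Fi F' i).ConnectedComponent} (hD : ¬(Uu F' x i ∧ x ∈ D.supp)) :
    (D.map (homInl F' i)).supp = (fun p => (Sum.inl (i,p) : (Fin 4 × V) ⊕ Fin 2)) '' D.supp := by
  obtain ⟨p₀, hp₀⟩ := D.exists_rep
  obtain rfl : D = (Fi F' i).connectedComponentMk p₀ := hp₀.symm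
  rw [ConnectedComponent.map_mk]
  apply Set.Subset.antisymm
  · intro w hw
    have hreach : F'.Reachable (Sum.inl (i,p₀)) w :=
      (ConnectedComponent.eq.mp ((ConnectedComponent.mem_supp_iff _ _).mp hw)).symm
    refine reach_mem_of_closed ?_ ⟨p₀, rfl, rfl⟩ hreach
    rintro a ⟨q, hq, rfl⟩ b hab
    rcases fprime_adj_inl hsub hab with ⟨q', rfl⟩ | ⟨rfl, rfl⟩ | ⟨rfl, rfl⟩
    · refine ⟨q', ?_, rfl⟩
      have : (Fi F' i).connectedComponentMk q' = (Fi F' i).connectedComponentMk q :=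
        ConnectedComponent.eq.mpr (Adj.reachable (by exact hab.symm))
      rw [ConnectedComponent.mem_supp_iff] at hq ⊢
      rw [this, hq]
    · exact absurd ⟨hab, hq⟩ hD
    · have hU : Uu F' x i := (used_iff hsub hne hdeg i).mpr hab
      have hx : x ∈ ((Fi F' i).connectedComponentMk p₀).supp := by
        rw [ConnectedComponent.mem_supp_iff] at hq ⊢
        rw [← hq]
        exact ConnectedComponent.eq.mpr (Fi_reach_xy hsub hne hdeg hU)
      exact absurd ⟨hU, hx⟩ hD
  · rintro w ⟨q, hq, rfl⟩
    rw [ConnectedComponent.mem_supp_iff] at hq ⊢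
    have := congrArg (ConnectedComponent.map (homInl F' i)) hq
    rw [ConnectedComponent.map_mk] at this
    exact this

lemma theta_ne (hsub : F' ≤ fourSeedGraft G x y) (hne : x ≠ y)
    (hdeg : ∀ a, (F'.neighborSet a).ncard = 2) {i : Fin 4}
    {D : (Fi F' i).ConnectedComponent} (hD : ¬(Uu F' x i ∧ x ∈ D.supp)) :
    D.map (homInl F' i) ≠ F'.connectedComponentMk (Sum.inr 0) := by
  intro h
  have h0 : (Sum.inr 0 : (Fin 4 × V) ⊕ Fin 2) ∈ (D.map (homInl F' i)).supp := by
    rw [h]; exact rfl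
  rw [theta_supp hsub hne hdeg hD] at h0
  obtain ⟨q, _, hq⟩ := h0
  exact absurd hq (by simp)

lemma count_formula (hsub : F' ≤ fourSeedGraft G x y) (hne : x ≠ y)
    (hdeg : ∀ a, (F'.neighborSet a).ncard = 2) (hex : ∃ i, Uu F' x i) (r : ℕ) :
    cycleCountMod4 F' r =
      (∑ i : Fin 4, Nat.card {D : (Fi F' i).ConnectedComponent //
          Nat.card D.supp % 4 = r ∧ ¬(Uu F' x i ∧ x ∈ D.supp)}) +
      (if Nat.card (F'.connectedComponentMk (Sum.inr 0)).supp % 4 = r then 1 else 0) := by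
  classical
  rw [cycleCountMod4, card_subtype_split _ (F'.connectedComponentMk (Sum.inr 0))]
  refine congrArg₂ (· + ·) ?_ rfl
  rw [← nat_card_sigma]
  refine (Nat.card_eq_of_bijective
    (fun z => ⟨z.2.1.map (homInl F' z.1), by
        rw [theta_supp hsub hne hdeg z.2.2.2, Nat.card_coe_set_eq,
          Set.ncard_image_of_injective _ (inl_snd_injective z.1),
          ← Nat.card_coe_set_eq]
        exact z.2.2.1, theta_ne hsub hne hdeg z.2.2.2⟩) ⟨?_, ?_⟩).symm
  · rintro ⟨i, D, hD⟩ ⟨i', D', hD'⟩ h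
    have hsupp : (D.map (homInl F' i)).supp = (D'.map (homInl F' i')).supp := by
      rw [Subtype.mk.injEq] at h; rw [h]
    rw [theta_supp hsub hne hdeg hD.2, theta_supp hsub hne hdeg hD'.2] at hsupp
    obtain ⟨p, hp⟩ := D.exists_rep
    have hpD : p ∈ D.supp := by rw [ConnectedComponent.mem_supp_iff]; exact hp
    have hmem : (Sum.inl (i,p) : (Fin 4 × V) ⊕ Fin 2) ∈
        (fun p => (Sum.inl (i',p) : (Fin 4 × V) ⊕ Fin 2)) '' D'.supp := by
      rw [← hsupp]; exact ⟨p, hpD, rfl⟩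
    obtain ⟨q, hq, heq⟩ := hmem
    obtain ⟨rfl, rfl⟩ : i' = i ∧ q = p := by simpa using heq
    obtain rfl : D = D' := by
      rw [ConnectedComponent.mem_supp_iff] at hq
      rw [← hp]
      exact hq
    rfl
  · rintro ⟨C, hP, hne'⟩
    obtain ⟨w, hw⟩ := C.exists_rep
    obtain rfl : C = F'.connectedComponentMk w := hw.symm
    match w with
    | Sum.inr j =>
      obtain rfl | rfl : j = 0 ∨ j = 1 := by omega
      · exact absurd rfl hne'
      · exfalso
        apply hne'
        obtain ⟨i, hU⟩ := hex
        have hV : Vv F' y i := (used_iff hsub hne hdeg i).mp hU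
        refine (ConnectedComponent.eq.mpr ?_)
        exact (Adj.reachable hV.symm).trans
          ((reach_inl i (Fi_reach_xy hsub hne hdeg hU).symm).trans (Adj.reachable hU))
    | Sum.inl (i, p) =>
      by_cases hcase : Uu F' x i ∧ (Fi F' i).Reachable p x
      · exfalso
        apply hne'
        exact ConnectedComponent.eq.mpr
          ((reach_inl i hcase.2).trans (Adj.reachable hcase.1))
      · refine ⟨⟨i, (Fi F' i).connectedComponentMk p, ?_, ?_⟩, ?_⟩
        · have hsuppC : (F'.connectedComponentMk (Sum.inl (i,p))).supp =
              ((((Fi F' i).connectedComponentMk p)).map (homInl F' i)).supp := rfl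
          have hxmem : ¬(Uu F' x i ∧ x ∈ ((Fi F' i).connectedComponentMk p).supp) := by
            rintro ⟨hU, hx⟩
            exact hcase ⟨hU, (ConnectedComponent.eq.mp
              ((ConnectedComponent.mem_supp_iff _ _).mp hx)).symm⟩
          rw [hsuppC, theta_supp hsub hne hdeg hxmem, Nat.card_coe_set_eq,
            Set.ncard_image_of_injective _ (inl_snd_injective i),
            ← Nat.card_coe_set_eq] at hP
          exact hP
        · rintro ⟨hU, hx⟩
          exact hcase ⟨hU, (ConnectedComponent.eq.mp
            ((ConnectedComponent.mem_supp_iff _ _).mp hx)).symm⟩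
        · exact Subtype.ext (ConnectedComponent.map_mk _ _)

end Count

section Big
variable {V : Type*} [Fintype V] {G : SimpleGraph V} {x y : V}
  {F' : SimpleGraph ((Fin 4 × V) ⊕ Fin 2)}

lemma big_supp (hsub : F' ≤ fourSeedGraft G x y) (hne : x ≠ y)
    (hdeg : ∀ a, (F'.neighborSet a).ncard = 2) {i₀ j₀ : Fin 4}
    (hU₀ : Uu F' x i₀) (hU₁ : Uu F' x j₀)
    (hall : ∀ i, Uu F' x i → i = i₀ ∨ i = j₀) :
    (F'.connectedComponentMk (Sum.inr 0)).supp =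
      insert (Sum.inr 0) (insert (Sum.inr 1)
        ((fun p => (Sum.inl (i₀,p) : (Fin 4 × V) ⊕ Fin 2)) ''
            ((Fi F' i₀).connectedComponentMk x).supp ∪
         (fun p => (Sum.inl (j₀,p) : (Fin 4 × V) ⊕ Fin 2)) ''
            ((Fi F' j₀).connectedComponentMk x).supp)) := by
  have hmemx : ∀ (i : Fin 4), x ∈ ((Fi F' i).connectedComponentMk x).supp := fun i => rfl
  have hmemy : ∀ (i : Fin 4), Uu F' x i → y ∈ ((Fi F' i).connectedComponentMk x).supp := by
    intro i hU
    rw [ConnectedComponent.mem_supp_iff]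
    exact ConnectedComponent.eq.mpr (Fi_reach_xy hsub hne hdeg hU).symm
  apply Set.Subset.antisymm
  · intro w hw
    have hreach : F'.Reachable (Sum.inr 0) w :=
      (ConnectedComponent.eq.mp ((ConnectedComponent.mem_supp_iff _ _).mp hw)).symm
    refine reach_mem_of_closed ?_ (Set.mem_insert _ _) hreach
    rintro a ha b hab
    rcases Set.mem_insert_iff.mp ha with rfl | ha
    · obtain ⟨i, rfl, hU⟩ := fprime_adj_u hsub hab
      rcases hall i hU with rfl | rfl
      · exact Set.mem_insert_of_mem _ (Set.mem_insert_of_mem _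
          (Or.inl ⟨x, hmemx i, rfl⟩))
      · exact Set.mem_insert_of_mem _ (Set.mem_insert_of_mem _
          (Or.inr ⟨x, hmemx i, rfl⟩))
    rcases Set.mem_insert_iff.mp ha with rfl | ha
    · obtain ⟨i, rfl, hV⟩ := fprime_adj_v hsub hab
      have hU : Uu F' x i := (used_iff hsub hne hdeg i).mpr hV
      rcases hall i hU with rfl | rfl
      · exact Set.mem_insert_of_mem _ (Set.mem_insert_of_mem _
          (Or.inl ⟨y, hmemy i hU, rfl⟩))
      · exact Set.mem_insert_of_mem _ (Set.mem_insert_of_mem _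
          (Or.inr ⟨y, hmemy i hU, rfl⟩))
    have key : ∀ (i : Fin 4), Uu F' x i → ∀ q, q ∈ ((Fi F' i).connectedComponentMk x).supp →
        ∀ b, F'.Adj (Sum.inl (i,q)) b →
        b = Sum.inr 0 ∨ b = Sum.inr 1 ∨
          ∃ q', b = Sum.inl (i,q') ∧ q' ∈ ((Fi F' i).connectedComponentMk x).supp := by
      intro i hU q hq b hb
      rcases fprime_adj_inl hsub hb with ⟨q', rfl⟩ | ⟨rfl, rfl⟩ | ⟨rfl, rfl⟩
      · refine Or.inr (Or.inr ⟨q', rfl, ?_⟩)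
        rw [ConnectedComponent.mem_supp_iff] at hq ⊢
        rw [← hq]
        exact ConnectedComponent.eq.mpr (Adj.reachable (by exact hb.symm))
      · exact Or.inl rfl
      · exact Or.inr (Or.inl rfl)
    rcases ha with ⟨q, hq, rfl⟩ | ⟨q, hq, rfl⟩
    · rcases key i₀ hU₀ q hq b hab with rfl | rfl | ⟨q', rfl, hq'⟩
      · exact Set.mem_insert _ _
      · exact Set.mem_insert_of_mem _ (Set.mem_insert _ _)
      · exact Set.mem_insert_of_mem _ (Set.mem_insert_of_mem _ (Or.inl ⟨q', hq', rfl⟩))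
    · rcases key j₀ hU₁ q hq b hab with rfl | rfl | ⟨q', rfl, hq'⟩
      · exact Set.mem_insert _ _
      · exact Set.mem_insert_of_mem _ (Set.mem_insert _ _)
      · exact Set.mem_insert_of_mem _ (Set.mem_insert_of_mem _ (Or.inr ⟨q', hq', rfl⟩))
  · intro w hw
    have hx0 : F'.Reachable (Sum.inr 0) (Sum.inl (i₀, x)) := (Adj.reachable hU₀).symm
    rcases Set.mem_insert_iff.mp hw with rfl | hw
    · exact rfl
    rcases Set.mem_insert_iff.mp hw with rfl | hw
    · rw [ConnectedComponent.mem_supp_iff]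
      refine ConnectedComponent.eq.mpr ?_
      have hV : Vv F' y i₀ := (used_iff hsub hne hdeg i₀).mp hU₀
      exact (Adj.reachable hV.symm).trans
        ((reach_inl _ (Fi_reach_xy hsub hne hdeg hU₀).symm).trans (Adj.reachable hU₀))
    rcases hw with ⟨q, hq, rfl⟩ | ⟨q, hq, rfl⟩
    · rw [ConnectedComponent.mem_supp_iff]
      refine ConnectedComponent.eq.mpr ?_
      have : (Fi F' i₀).Reachable q x :=
        ConnectedComponent.eq.mp ((ConnectedComponent.mem_supp_iff _ _).mp hq)
      exact (reach_inl _ this).trans (Adj.reachable hU₀)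
    · rw [ConnectedComponent.mem_supp_iff]
      refine ConnectedComponent.eq.mpr ?_
      have : (Fi F' j₀).Reachable q x :=
        ConnectedComponent.eq.mp ((ConnectedComponent.mem_supp_iff _ _).mp hq)
      exact (reach_inl _ this).trans (Adj.reachable hU₁)

lemma big_card (hsub : F' ≤ fourSeedGraft G x y) (hne : x ≠ y)
    (hdeg : ∀ a, (F'.neighborSet a).ncard = 2) {i₀ j₀ : Fin 4} (hij : i₀ ≠ j₀)
    (hU₀ : Uu F' x i₀) (hU₁ : Uu F' x j₀)
    (hall : ∀ i, Uu F' x i → i = i₀ ∨ i = j₀) {c : ℕ}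
    (hc₀ : Nat.card ((Fi F' i₀).connectedComponentMk x).supp % 4 = c)
    (hc₁ : Nat.card ((Fi F' j₀).connectedComponentMk x).supp % 4 = c) :
    Nat.card (F'.connectedComponentMk (Sum.inr 0)).supp % 4 = (2 + 2 * c) % 4 := by
  rw [Nat.card_coe_set_eq, big_supp hsub hne hdeg hU₀ hU₁ hall]
  have hdisj : Disjoint
      ((fun p => (Sum.inl (i₀,p) : (Fin 4 × V) ⊕ Fin 2)) ''
        ((Fi F' i₀).connectedComponentMk x).supp)
      ((fun p => (Sum.inl (j₀,p) : (Fin 4 × V) ⊕ Fin 2)) ''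
        ((Fi F' j₀).connectedComponentMk x).supp) := by
    rw [Set.disjoint_left]
    rintro a ⟨p, _, rfl⟩ ⟨q, _, heq⟩
    obtain ⟨h1, -⟩ : j₀ = i₀ ∧ q = p := by simpa using heq
    exact hij h1.symm
  rw [Set.ncard_insert_of_notMem (by simp), Set.ncard_insert_of_notMem (by simp),
    Set.ncard_union_eq hdisj (Set.toFinite _) (Set.toFinite _),
    Set.ncard_image_of_injective _ (inl_snd_injective i₀),
    Set.ncard_image_of_injective _ (inl_snd_injective j₀)]
  rw [Nat.card_coe_set_eq] at hc₀ hc₁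
  omega

lemma m_unused {i : Fin 4} (hU : ¬ Uu F' x i) (r : ℕ) :
    Nat.card {D : (Fi F' i).ConnectedComponent //
        Nat.card D.supp % 4 = r ∧ ¬(Uu F' x i ∧ x ∈ D.supp)} =
      cycleCountMod4 (Fi F' i) r :=
  Nat.card_congr (Equiv.subtypeEquivRight (fun D => by simp [hU]))

lemma m_used (hsub : F' ≤ fourSeedGraft G x y) {i : Fin 4} (hU : Uu F' x i) (r : ℕ) :
    Nat.card {D : (Fi F' i).ConnectedComponent //
        Nat.card D.supp % 4 = r ∧ ¬(Uu F' x i ∧ x ∈ D.supp)} +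
      (if Nat.card ((Fi F' i).connectedComponentMk x).supp % 4 = r then 1 else 0) =
      cycleCountMod4 (Fi F' i) r := by
  rw [cycleCountMod4]
  conv_rhs => rw [card_subtype_split (fun D => Nat.card D.supp % 4 = r)
    ((Fi F' i).connectedComponentMk x)]
  have he : Nat.card {D : (Fi F' i).ConnectedComponent //
        Nat.card D.supp % 4 = r ∧ D ≠ (Fi F' i).connectedComponentMk x} =
      Nat.card {D : (Fi F' i).ConnectedComponent //
        Nat.card D.supp % 4 = r ∧ ¬(Uu F' x i ∧ x ∈ D.supp)} := by
    apply Nat.card_congr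
    apply Equiv.subtypeEquivRight
    intro D
    constructor
    · rintro ⟨h1, h2⟩
      refine ⟨h1, ?_⟩
      rintro ⟨-, hx⟩
      exact h2 ((ConnectedComponent.mem_supp_iff _ _).mp hx).symm
    · rintro ⟨h1, h2⟩
      refine ⟨h1, ?_⟩
      intro heq
      refine h2 ⟨hU, ?_⟩
      rw [ConnectedComponent.mem_supp_iff, heq]
  rw [← he]

end Big

/-- an explicit 2-factor of the graft, using copies `i` and `j` -/
def graftFactor {V : Type*} (Fin_ Fout : SimpleGraph V) (x y : V) (i j : Fin 4) :
    SimpleGraph ((Fin 4 × V) ⊕ Fin 2) :=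
  SimpleGraph.fromRel (fun a b =>
    (∃ k p q, a = Sum.inl (k,p) ∧ b = Sum.inl (k,q) ∧
      (((k = i ∨ k = j) ∧ Fin_.Adj p q ∧ ¬(p = x ∧ q = y) ∧ ¬(p = y ∧ q = x)) ∨
       ((k ≠ i ∧ k ≠ j) ∧ Fout.Adj p q))) ∨
    ((a = Sum.inl (i,x) ∨ a = Sum.inl (j,x)) ∧ b = Sum.inr 0) ∨
    ((a = Sum.inl (i,y) ∨ a = Sum.inl (j,y)) ∧ b = Sum.inr 1))

section GF
variable {V : Type*} {G Fin_ Fout : SimpleGraph V} {x y : V} {i j : Fin 4}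

lemma graftFactor_adj (a b : (Fin 4 × V) ⊕ Fin 2) :
    (graftFactor Fin_ Fout x y i j).Adj a b ↔
    (∃ k p q, a = Sum.inl (k,p) ∧ b = Sum.inl (k,q) ∧
      (((k = i ∨ k = j) ∧ Fin_.Adj p q ∧ ¬(p = x ∧ q = y) ∧ ¬(p = y ∧ q = x)) ∨
       ((k ≠ i ∧ k ≠ j) ∧ Fout.Adj p q))) ∨
    ((a = Sum.inl (i,x) ∨ a = Sum.inl (j,x)) ∧ b = Sum.inr 0) ∨
    ((b = Sum.inl (i,x) ∨ b = Sum.inl (j,x)) ∧ a = Sum.inr 0) ∨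
    ((a = Sum.inl (i,y) ∨ a = Sum.inl (j,y)) ∧ b = Sum.inr 1) ∨
    ((b = Sum.inl (i,y) ∨ b = Sum.inl (j,y)) ∧ a = Sum.inr 1) := by
  rw [graftFactor, SimpleGraph.fromRel_adj]
  constructor
  · rintro ⟨hne, (⟨k,p,q,rfl,rfl,h⟩ | ⟨h1,rfl⟩ | ⟨h1,rfl⟩) |
      (⟨k,p,q,rfl,rfl,h⟩ | ⟨h1,rfl⟩ | ⟨h1,rfl⟩)⟩
    · exact Or.inl ⟨k,p,q,rfl,rfl,h⟩
    · exact Or.inr (Or.inl ⟨h1, rfl⟩)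
    · exact Or.inr (Or.inr (Or.inr (Or.inl ⟨h1, rfl⟩)))
    · refine Or.inl ⟨k,q,p,rfl,rfl,?_⟩
      rcases h with ⟨hk, ha, hb, hc⟩ | ⟨hk, ha⟩
      · exact Or.inl ⟨hk, ha.symm, fun ⟨u1,u2⟩ => hc ⟨u2,u1⟩, fun ⟨u1,u2⟩ => hb ⟨u2,u1⟩⟩
      · exact Or.inr ⟨hk, ha.symm⟩
    · exact Or.inr (Or.inr (Or.inl ⟨h1, rfl⟩))
    · exact Or.inr (Or.inr (Or.inr (Or.inr ⟨h1, rfl⟩)))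
  · rintro (⟨k,p,q,rfl,rfl,h⟩ | ⟨h1,rfl⟩ | ⟨h1,rfl⟩ | ⟨h1,rfl⟩ | ⟨h1,rfl⟩)
    · refine ⟨?_, Or.inl (Or.inl ⟨k,p,q,rfl,rfl,h⟩)⟩
      rcases h with ⟨_, ha, _⟩ | ⟨_, ha⟩ <;> simp [ha.ne]
    · exact ⟨by rcases h1 with rfl | rfl <;> simp, Or.inl (Or.inr (Or.inl ⟨h1, rfl⟩))⟩
    · exact ⟨by rcases h1 with rfl | rfl <;> simp, Or.inr (Or.inr (Or.inl ⟨h1, rfl⟩))⟩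
    · exact ⟨by rcases h1 with rfl | rfl <;> simp, Or.inl (Or.inr (Or.inr ⟨h1, rfl⟩))⟩
    · exact ⟨by rcases h1 with rfl | rfl <;> simp, Or.inr (Or.inr (Or.inr ⟨h1, rfl⟩))⟩

lemma graftFactor_le (hFin : Fin_ ≤ G) (hFout : Fout ≤ G) (hFoutxy : ¬ Fout.Adj x y) :
    graftFactor Fin_ Fout x y i j ≤ fourSeedGraft G x y := by
  intro a b h
  rw [graft_adj]
  rcases (graftFactor_adj a b).mp h with
    (⟨k,p,q,rfl,rfl,⟨_,ha,hb,hc⟩ | ⟨_,ha⟩⟩ | ⟨h1,rfl⟩ | ⟨h1,rfl⟩ | ⟨h1,rfl⟩ | ⟨h1,rfl⟩)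
  · exact Or.inl ⟨k,p,q,rfl,rfl,hFin ha,hb,hc⟩
  · refine Or.inl ⟨k,p,q,rfl,rfl,hFout ha,?_,?_⟩
    · rintro ⟨rfl, rfl⟩; exact hFoutxy ha
    · rintro ⟨rfl, rfl⟩; exact hFoutxy ha.symm
  · rcases h1 with rfl | rfl
    · exact Or.inr (Or.inl ⟨i, rfl, rfl⟩)
    · exact Or.inr (Or.inl ⟨j, rfl, rfl⟩)
  · rcases h1 with rfl | rfl
    · exact Or.inr (Or.inr (Or.inl ⟨i, rfl, rfl⟩))
    · exact Or.inr (Or.inr (Or.inl ⟨j, rfl, rfl⟩))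
  · rcases h1 with rfl | rfl
    · exact Or.inr (Or.inr (Or.inr (Or.inl ⟨i, rfl, rfl⟩)))
    · exact Or.inr (Or.inr (Or.inr (Or.inl ⟨j, rfl, rfl⟩)))
  · rcases h1 with rfl | rfl
    · exact Or.inr (Or.inr (Or.inr (Or.inr ⟨i, rfl, rfl⟩)))
    · exact Or.inr (Or.inr (Or.inr (Or.inr ⟨j, rfl, rfl⟩)))

lemma gf_nbr_u (hij : i ≠ j) : (graftFactor Fin_ Fout x y i j).neighborSet (Sum.inr 0) =
    {Sum.inl (i,x), Sum.inl (j,x)} := by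
  ext b
  constructor
  · intro h
    rcases (graftFactor_adj _ _).mp h with
      (⟨k,p,q,heq,_⟩ | ⟨h1,-⟩ | ⟨h1,-⟩ | ⟨h1,-⟩ | ⟨-,heq⟩)
    · exact absurd heq (by simp)
    · rcases h1 with heq | heq <;> exact absurd heq (by simp)
    · exact h1
    · rcases h1 with heq | heq <;> exact absurd heq (by simp)
    · exact absurd heq (by simp)
  · intro h
    refine (graftFactor_adj _ _).mpr (Or.inr (Or.inr (Or.inl ⟨?_, rfl⟩)))
    exact h
lemma gf_nbr_v (hij : i ≠ j) : (graftFactor Fin_ Fout x y i j).neighborSet (Sum.inr 1) =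
    {Sum.inl (i,y), Sum.inl (j,y)} := by
  ext b
  constructor
  · intro h
    rcases (graftFactor_adj _ _).mp h with
      (⟨k,p,q,heq,_⟩ | ⟨h1,-⟩ | ⟨-,heq⟩ | ⟨h1,-⟩ | ⟨h1,-⟩)
    · exact absurd heq (by simp)
    · rcases h1 with heq | heq <;> exact absurd heq (by simp)
    · exact absurd heq (by simp)
    · rcases h1 with heq | heq <;> exact absurd heq (by simp)
    · exact h1
  · intro h
    exact (graftFactor_adj _ _).mpr (Or.inr (Or.inr (Or.inr (Or.inr ⟨h, rfl⟩))))

lemma gf_nbr_used_mid {k : Fin 4} (hk : k = i ∨ k = j) {p : V} (hx : p ≠ x) (hy : p ≠ y) :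
    (graftFactor Fin_ Fout x y i j).neighborSet (Sum.inl (k,p)) =
      (fun q => (Sum.inl (k,q) : (Fin 4 × V) ⊕ Fin 2)) '' Fin_.neighborSet p := by
  have hki : k = i ∨ k = j → ¬(k ≠ i ∧ k ≠ j) := fun h ⟨h1,h2⟩ => h.elim h1 h2
  ext b
  constructor
  · intro h
    rcases (graftFactor_adj _ _).mp h with
      (⟨k',p',q,heq,rfl,hcase⟩ | ⟨h1,rfl⟩ | ⟨h1,heq⟩ | ⟨h1,rfl⟩ | ⟨h1,heq⟩)
    · obtain ⟨rfl, rfl⟩ : k = k' ∧ p = p' := by simpa using heq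
      rcases hcase with ⟨_, ha, _⟩ | ⟨hk', _⟩
      · exact ⟨q, ha, rfl⟩
      · exact absurd hk' (hki hk)
    · rcases h1 with heq | heq <;>
        · obtain ⟨rfl, rfl⟩ : k = _ ∧ p = x := by simpa using heq
          exact absurd rfl hx
    · exact absurd heq (by simp)
    · rcases h1 with heq | heq <;>
        · obtain ⟨rfl, rfl⟩ : k = _ ∧ p = y := by simpa using heq
          exact absurd rfl hy
    · exact absurd heq (by simp)
  · rintro ⟨q, hq, rfl⟩
    refine (graftFactor_adj _ _).mpr (Or.inl ⟨k, p, q, rfl, rfl,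
      Or.inl ⟨hk, hq, fun h => hx h.1, fun h => hy h.1⟩⟩)

lemma gf_nbr_used_x (hne : x ≠ y) {k : Fin 4} (hk : k = i ∨ k = j) :
    (graftFactor Fin_ Fout x y i j).neighborSet (Sum.inl (k,x)) =
      insert (Sum.inr 0)
        ((fun q => (Sum.inl (k,q) : (Fin 4 × V) ⊕ Fin 2)) '' (Fin_.neighborSet x \ {y})) := by
  have hki : k = i ∨ k = j → ¬(k ≠ i ∧ k ≠ j) := fun h ⟨h1,h2⟩ => h.elim h1 h2
  ext b
  constructor
  · intro h
    rcases (graftFactor_adj _ _).mp h with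
      (⟨k',p',q,heq,rfl,hcase⟩ | ⟨h1,rfl⟩ | ⟨h1,heq⟩ | ⟨h1,rfl⟩ | ⟨h1,heq⟩)
    · obtain ⟨rfl, rfl⟩ : k = k' ∧ x = p' := by simpa using heq
      rcases hcase with ⟨_, ha, hb, _⟩ | ⟨hk', _⟩
      · exact Set.mem_insert_of_mem _ ⟨q, ⟨ha, fun hq => hb ⟨rfl, hq⟩⟩, rfl⟩
      · exact absurd hk' (hki hk)
    · exact Set.mem_insert _ _
    · exact absurd heq (by simp)
    · rcases h1 with heq | heq <;>
        · obtain ⟨rfl, rfl⟩ : k = _ ∧ x = y := by simpa using heq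
          exact absurd rfl hne
    · exact absurd heq (by simp)
  · intro hb
    rcases Set.mem_insert_iff.mp hb with rfl | ⟨q, ⟨hq1, hq2⟩, rfl⟩
    · refine (graftFactor_adj _ _).mpr (Or.inr (Or.inl ⟨?_, rfl⟩))
      rcases hk with rfl | rfl
      · exact Or.inl rfl
      · exact Or.inr rfl
    · exact (graftFactor_adj _ _).mpr (Or.inl ⟨k, x, q, rfl, rfl,
        Or.inl ⟨hk, hq1, fun h => hq2 h.2, fun h => hne h.1⟩⟩)

lemma gf_nbr_used_y (hne : x ≠ y) {k : Fin 4} (hk : k = i ∨ k = j) :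
    (graftFactor Fin_ Fout x y i j).neighborSet (Sum.inl (k,y)) =
      insert (Sum.inr 1)
        ((fun q => (Sum.inl (k,q) : (Fin 4 × V) ⊕ Fin 2)) '' (Fin_.neighborSet y \ {x})) := by
  have hki : k = i ∨ k = j → ¬(k ≠ i ∧ k ≠ j) := fun h ⟨h1,h2⟩ => h.elim h1 h2
  ext b
  constructor
  · intro h
    rcases (graftFactor_adj _ _).mp h with
      (⟨k',p',q,heq,rfl,hcase⟩ | ⟨h1,rfl⟩ | ⟨h1,heq⟩ | ⟨h1,rfl⟩ | ⟨h1,heq⟩)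
    · obtain ⟨rfl, rfl⟩ : k = k' ∧ y = p' := by simpa using heq
      rcases hcase with ⟨_, ha, _, hc⟩ | ⟨hk', _⟩
      · exact Set.mem_insert_of_mem _ ⟨q, ⟨ha, fun hq => hc ⟨rfl, hq⟩⟩, rfl⟩
      · exact absurd hk' (hki hk)
    · rcases h1 with heq | heq <;>
        · obtain ⟨rfl, rfl⟩ : k = _ ∧ y = x := by simpa using heq
          exact absurd rfl (Ne.symm hne)
    · exact absurd heq (by simp)
    · exact Set.mem_insert _ _
    · exact absurd heq (by simp)
  · intro hb
    rcases Set.mem_insert_iff.mp hb with rfl | ⟨q, ⟨hq1, hq2⟩, rfl⟩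
    · refine (graftFactor_adj _ _).mpr (Or.inr (Or.inr (Or.inr (Or.inl ⟨?_, rfl⟩))))
      rcases hk with rfl | rfl
      · exact Or.inl rfl
      · exact Or.inr rfl
    · exact (graftFactor_adj _ _).mpr (Or.inl ⟨k, y, q, rfl, rfl,
        Or.inl ⟨hk, hq1, fun h => Ne.symm hne h.1, fun h => hq2 h.2⟩⟩)

lemma gf_nbr_unused {k : Fin 4} (hk : k ≠ i ∧ k ≠ j) (p : V) :
    (graftFactor Fin_ Fout x y i j).neighborSet (Sum.inl (k,p)) =
      (fun q => (Sum.inl (k,q) : (Fin 4 × V) ⊕ Fin 2)) '' Fout.neighborSet p := by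
  ext b
  constructor
  · intro h
    rcases (graftFactor_adj _ _).mp h with
      (⟨k',p',q,heq,rfl,hcase⟩ | ⟨h1,rfl⟩ | ⟨h1,heq⟩ | ⟨h1,rfl⟩ | ⟨h1,heq⟩)
    · obtain ⟨rfl, rfl⟩ : k = k' ∧ p = p' := by simpa using heq
      rcases hcase with ⟨hk', _⟩ | ⟨_, ha⟩
      · exact absurd hk' (by rcases hk' with rfl | rfl; exacts [absurd rfl hk.1, absurd rfl hk.2])
      · exact ⟨q, ha, rfl⟩
    · rcases h1 with heq | heq <;>
        · obtain ⟨rfl, -⟩ : k = _ ∧ p = x := by simpa using heq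
          first | exact absurd rfl hk.1 | exact absurd rfl hk.2
    · exact absurd heq (by simp)
    · rcases h1 with heq | heq <;>
        · obtain ⟨rfl, -⟩ : k = _ ∧ p = y := by simpa using heq
          first | exact absurd rfl hk.1 | exact absurd rfl hk.2
    · exact absurd heq (by simp)
  · rintro ⟨q, hq, rfl⟩
    exact (graftFactor_adj _ _).mpr (Or.inl ⟨k, p, q, rfl, rfl, Or.inr ⟨hk, hq⟩⟩)

lemma gf_two_factor [Fintype V] (hij : i ≠ j) (hFin : IsTwoFactor G Fin_)
    (hFxy : Fin_.Adj x y) (hFout : IsTwoFactor G Fout) (hFoutxy : ¬ Fout.Adj x y) :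
    IsTwoFactor (fourSeedGraft G x y) (graftFactor Fin_ Fout x y i j) := by
  have hne : x ≠ y := hFxy.ne
  refine ⟨graftFactor_le hFin.1 hFout.1 hFoutxy, ?_⟩
  intro a
  match a with
  | Sum.inr l =>
    obtain rfl | rfl : l = 0 ∨ l = 1 := by omega
    · rw [gf_nbr_u hij]
      exact Set.ncard_pair (by simp [hij])
    · rw [gf_nbr_v hij]
      exact Set.ncard_pair (by simp [hij])
  | Sum.inl (k, p) =>
    by_cases hk : k = i ∨ k = j
    · by_cases hx : p = x
      · subst hx
        rw [gf_nbr_used_x hne hk, Set.ncard_insert_of_notMem (by simp),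
          Set.ncard_image_of_injective _ (inl_snd_injective k),
          Set.ncard_diff_singleton_of_mem (by simpa using hFxy), hFin.2]
      · by_cases hy : p = y
        · subst hy
          rw [gf_nbr_used_y hne hk, Set.ncard_insert_of_notMem (by simp),
            Set.ncard_image_of_injective _ (inl_snd_injective k),
            Set.ncard_diff_singleton_of_mem (by simpa using hFxy.symm), hFin.2]
        · rw [gf_nbr_used_mid hk hx hy,
            Set.ncard_image_of_injective _ (inl_snd_injective k), hFin.2]
    · push_neg at hk
      rw [gf_nbr_unused hk p, Set.ncard_image_of_injective _ (inl_snd_injective k), hFout.2]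

lemma gf_adj_ux : (graftFactor Fin_ Fout x y i j).Adj (Sum.inl (i,x)) (Sum.inr 0) :=
  (graftFactor_adj _ _).mpr (Or.inr (Or.inl ⟨Or.inl rfl, rfl⟩))

lemma gf_adj_vy : (graftFactor Fin_ Fout x y i j).Adj (Sum.inl (i,y)) (Sum.inr 1) :=
  (graftFactor_adj _ _).mpr (Or.inr (Or.inr (Or.inr (Or.inl ⟨Or.inl rfl, rfl⟩))))

lemma gf_not_adj_ux {k : Fin 4} (hk : k ≠ i ∧ k ≠ j) :
    ¬ (graftFactor Fin_ Fout x y i j).Adj (Sum.inl (k,x)) (Sum.inr 0) := by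
  intro h
  rcases (graftFactor_adj _ _).mp h with
    (⟨k',p',q,_,heq,_⟩ | ⟨h1,_⟩ | ⟨_,heq⟩ | ⟨_,heq⟩ | ⟨_,heq⟩)
  · exact absurd heq (by simp)
  · rcases h1 with heq | heq <;>
      · obtain ⟨rfl, -⟩ : k = _ ∧ x = x := by simpa using heq
        first | exact absurd rfl hk.1 | exact absurd rfl hk.2
  · exact absurd heq (by simp)
  · exact absurd heq (by simp)
  · exact absurd heq (by simp)

lemma gf_not_adj_vy {k : Fin 4} (hk : k ≠ i ∧ k ≠ j) :
    ¬ (graftFactor Fin_ Fout x y i j).Adj (Sum.inl (k,y)) (Sum.inr 1) := by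
  intro h
  rcases (graftFactor_adj _ _).mp h with
    (⟨k',p',q,_,heq,_⟩ | ⟨_,heq⟩ | ⟨_,heq⟩ | ⟨h1,_⟩ | ⟨_,heq⟩)
  · exact absurd heq (by simp)
  · exact absurd heq (by simp)
  · exact absurd heq (by simp)
  · rcases h1 with heq | heq <;>
      · obtain ⟨rfl, -⟩ : k = _ ∧ y = y := by simpa using heq
        first | exact absurd rfl hk.1 | exact absurd rfl hk.2
  · exact absurd heq (by simp)

end GF


section Glue
variable {V : Type*} [Fintype V] {G : SimpleGraph V} {x y : V}
  {F' : SimpleGraph ((Fin 4 × V) ⊕ Fin 2)}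

lemma Fi_unused_two_factor (hsub : F' ≤ fourSeedGraft G x y) (hxy : G.Adj x y)
    (hdeg : ∀ a, (F'.neighborSet a).ncard = 2) {i : Fin 4} (hU : ¬ Uu F' x i) :
    IsTwoFactor G (Fi F' i) := by
  have hne := hxy.ne
  refine ⟨Fi_le hsub i, fun v => ?_⟩
  by_cases hvx : v = x
  · rw [hvx]
    exact Fi_deg_x_unused hsub hne hdeg hU
  · by_cases hvy : v = y
    · rw [hvy]
      exact Fi_deg_y_unused hsub hne hdeg
        (fun hV => hU ((used_iff hsub hne hdeg i).mpr hV))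
    · exact Fi_deg_mid hsub hdeg i v hvx hvy

lemma used_pair (hsub : F' ≤ fourSeedGraft G x y)
    (hdeg : ∀ a, (F'.neighborSet a).ncard = 2) :
    ∃ i₀ j₀ : Fin 4, i₀ ≠ j₀ ∧ Uu F' x i₀ ∧ Uu F' x j₀ ∧
      ∀ i, Uu F' x i → i = i₀ ∨ i = j₀ := by
  obtain ⟨i₀, j₀, hij, hset⟩ := Set.ncard_eq_two.mp (used_ncard hsub hdeg)
  have hmem : ∀ i, Uu F' x i ↔ i ∈ ({i₀, j₀} : Set (Fin 4)) := fun i => by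
    rw [← hset]; rfl
  exact ⟨i₀, j₀, hij, (hmem i₀).mpr (Set.mem_insert _ _),
    (hmem j₀).mpr (Set.mem_insert_of_mem _ rfl), fun i h => (hmem i).mp h⟩

lemma comp_card_used (hsub : F' ≤ fourSeedGraft G x y) (hxy : G.Adj x y)
    (hdeg : ∀ a, (F'.neighborSet a).ncard = 2) {c : ℕ}
    (hc : ∀ F, IsTwoFactor G F → F.Adj x y →
      Nat.card (F.connectedComponentMk x).supp % 4 = c)
    {i : Fin 4} (hU : Uu F' x i) :
    Nat.card ((Fi F' i).connectedComponentMk x).supp % 4 = c := by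
  have h1 := Gi_supp_eq hsub hxy.ne hdeg hU x
  rw [h1]
  exact hc _ (Gi_two_factor hsub hxy hdeg hU) (Gi_adj_xy hxy.ne i)

lemma big_card_const (hsub : F' ≤ fourSeedGraft G x y) (hxy : G.Adj x y)
    (hdeg : ∀ a, (F'.neighborSet a).ncard = 2) {c : ℕ}
    (hc : ∀ F, IsTwoFactor G F → F.Adj x y →
      Nat.card (F.connectedComponentMk x).supp % 4 = c) :
    Nat.card (F'.connectedComponentMk (Sum.inr 0)).supp % 4 = (2 + 2 * c) % 4 := by
  obtain ⟨i₀, j₀, hij, hU₀, hU₁, hall⟩ := used_pair hsub hdeg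
  exact big_card hsub hxy.ne hdeg hij hU₀ hU₁ hall
    (comp_card_used hsub hxy hdeg hc hU₀) (comp_card_used hsub hxy hdeg hc hU₁)

lemma reach_v_u (hsub : F' ≤ fourSeedGraft G x y) (hne : x ≠ y)
    (hdeg : ∀ a, (F'.neighborSet a).ncard = 2) {i : Fin 4} (hU : Uu F' x i) :
    F'.Reachable (Sum.inr 1) (Sum.inr 0) := by
  have hV := (used_iff hsub hne hdeg i).mp hU
  exact (Adj.reachable hV.symm).trans
    ((reach_inl i (Fi_reach_xy hsub hne hdeg hU).symm).trans (Adj.reachable hU))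

lemma graft_count_parity (hsub : F' ≤ fourSeedGraft G x y) (hxy : G.Adj x y)
    (hdeg : ∀ a, (F'.neighborSet a).ncard = 2) {c : ℕ}
    (hc : ∀ F, IsTwoFactor G F → F.Adj x y →
      Nat.card (F.connectedComponentMk x).supp % 4 = c) (r : ℕ) :
    cycleCountMod4 F' r % 2 =
      ((∑ i : Fin 4, cycleCountMod4 (Fi F' i) r) +
        (if (2 + 2 * c) % 4 = r then 1 else 0)) % 2 := by
  classical
  have hne := hxy.ne
  obtain ⟨i₀, j₀, hij, hU₀, hU₁, hall⟩ := used_pair hsub hdeg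
  have hex : ∃ i, Uu F' x i := ⟨i₀, hU₀⟩
  rw [count_formula hsub hne hdeg hex r, big_card_const hsub hxy hdeg hc]
  have key : ∀ i : Fin 4,
      Nat.card {D : (Fi F' i).ConnectedComponent //
        Nat.card D.supp % 4 = r ∧ ¬(Uu F' x i ∧ x ∈ D.supp)} +
        (if Uu F' x i then (if c = r then 1 else 0) else 0) =
      cycleCountMod4 (Fi F' i) r := by
    intro i
    by_cases hU : Uu F' x i
    · rw [if_pos hU]
      have h2 := m_used hsub hU r
      rw [comp_card_used hsub hxy hdeg hc hU] at h2
      exact h2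
    · rw [if_neg hU, add_zero]
      exact m_unused hU r
  have hsum := Finset.sum_congr rfl (fun i (_ : i ∈ Finset.univ) => key i)
  rw [Finset.sum_add_distrib] at hsum
  have hfil : Finset.univ.filter (fun i => Uu F' x i) = {i₀, j₀} := by
    ext k
    simp only [Finset.mem_filter, Finset.mem_univ, true_and, Finset.mem_insert,
      Finset.mem_singleton]
    constructor
    · exact fun h => hall k h
    · rintro (rfl | rfl)
      exacts [hU₀, hU₁]
  have hcnt : (∑ i : Fin 4, if Uu F' x i then (if c = r then 1 else 0) else 0)
      = 2 * (if c = r then 1 else 0) := by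
    rw [← Finset.sum_filter, hfil, Finset.sum_const, Finset.card_pair hij, smul_eq_mul]
  omega

end Glue

theorem fourSeedGraft_strongly_pseudo {V : Type*} [Fintype V]
    (G : SimpleGraph V) (x y : V) (hxy : G.Adj x y)
    (hreg : ∀ v, (G.neighborSet v).ncard = 4)
    (hG : StronglyPseudoTwoFactorIso G)
    (hloyal : PseudoLoyal G x y) :
    (∀ a, ((fourSeedGraft G x y).neighborSet a).ncard = 4) ∧
    StronglyPseudoTwoFactorIso (fourSeedGraft G x y) ∧
    (∀ i : Fin 4, PseudoLoyal (fourSeedGraft G x y) (Sum.inl (i, x)) (Sum.inr 0) ∧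
      PseudoLoyal (fourSeedGraft G x y) (Sum.inl (i, y)) (Sum.inr 1)) := by
  classical
  have hne : x ≠ y := hxy.ne
  obtain ⟨hadjxy, ⟨Fin_, hFin, hFxy⟩, ⟨Fout, hFout, hFoutxy⟩, c, hc⟩ := hloyal
  have hpair : ∀ k : Fin 4, k ≠ k + 1 ∧ k ≠ k + 2 ∧ k + 1 ≠ k + 2 := by decide
  have hgf : ∀ i j : Fin 4, i ≠ j →
      IsTwoFactor (fourSeedGraft G x y) (graftFactor Fin_ Fout x y i j) :=
    fun i j hij => gf_two_factor hij hFin hFxy hFout hFoutxy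
  have hcomp : ∀ F' : SimpleGraph ((Fin 4 × V) ⊕ Fin 2),
      IsTwoFactor (fourSeedGraft G x y) F' → ∀ i : Fin 4,
      ∃ H : SimpleGraph V, IsTwoFactor G H ∧
        ∀ r, cycleCountMod4 (Fi F' i) r = cycleCountMod4 H r := by
    intro F' hF' i
    by_cases hU : Uu F' x i
    · exact ⟨GiG F' x y i, Gi_two_factor hF'.1 hxy hF'.2 hU,
        fun r => Gi_count_eq hF'.1 hne hF'.2 hU r⟩
    · exact ⟨Fi F' i, Fi_unused_two_factor hF'.1 hxy hF'.2 hU, fun r => rfl⟩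
  refine ⟨graft_regular G x y hxy hreg, ⟨⟨_, hgf 0 1 (by decide)⟩, ?_⟩, ?_⟩
  · intro F₁ F₂ h₁ h₂
    have main : ∀ r : ℕ,
        (∀ H₁ H₂ : SimpleGraph V, IsTwoFactor G H₁ → IsTwoFactor G H₂ →
          cycleCountMod4 H₁ r % 2 = cycleCountMod4 H₂ r % 2) →
        cycleCountMod4 F₁ r % 2 = cycleCountMod4 F₂ r % 2 := by
      intro r hGr
      have e₁ := graft_count_parity h₁.1 hxy h₁.2 hc r
      have e₂ := graft_count_parity h₂.1 hxy h₂.2 hc r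
      have hsum : (∑ i : Fin 4, cycleCountMod4 (Fi F₁ i) r) % 2 =
          (∑ i : Fin 4, cycleCountMod4 (Fi F₂ i) r) % 2 := by
        rw [Finset.sum_nat_mod]
        conv_rhs => rw [Finset.sum_nat_mod]
        congr 1
        apply Finset.sum_congr rfl
        intro i _
        obtain ⟨H₁, hH₁, hr₁⟩ := hcomp F₁ h₁ i
        obtain ⟨H₂, hH₂, hr₂⟩ := hcomp F₂ h₂ i
        rw [hr₁ r, hr₂ r]
        exact hGr H₁ H₂ hH₁ hH₂
      omega
    exact ⟨main 0 (fun H₁ H₂ a b => (hG.2 H₁ H₂ a b).1),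
      main 2 (fun H₁ H₂ a b => (hG.2 H₁ H₂ a b).2)⟩
  · intro i
    obtain ⟨h1i, h2i, h3i⟩ := hpair i
    constructor
    · refine ⟨(graft_adj G x y _ _).mpr (Or.inr (Or.inl ⟨i, rfl, rfl⟩)),
        ⟨_, hgf i (i+1) h1i, gf_adj_ux⟩,
        ⟨_, hgf (i+1) (i+2) h3i, gf_not_adj_ux ⟨h1i, h2i⟩⟩, (2 + 2 * c) % 4, ?_⟩
      intro F hF hadj
      rw [ConnectedComponent.connectedComponentMk_eq_of_adj hadj]
      exact big_card_const hF.1 hxy hF.2 hc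
    · refine ⟨(graft_adj G x y _ _).mpr (Or.inr (Or.inr (Or.inr (Or.inl ⟨i, rfl, rfl⟩)))),
        ⟨_, hgf i (i+1) h1i, gf_adj_vy⟩,
        ⟨_, hgf (i+1) (i+2) h3i, gf_not_adj_vy ⟨h1i, h2i⟩⟩, (2 + 2 * c) % 4, ?_⟩
      intro F hF hadj
      have hU : Uu F x i := (used_iff hF.1 hne hF.2 i).mpr hadj
      have hcomp2 : F.connectedComponentMk (Sum.inl (i,y)) =
          F.connectedComponentMk (Sum.inr 0) := by
        rw [ConnectedComponent.connectedComponentMk_eq_of_adj hadj]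
        exact ConnectedComponent.eq.mpr (reach_v_u hF.1 hne hF.2 hU)
      rw [hcomp2]
      exact big_card_const hF.1 hxy hF.2 hc
end
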